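/- arXiv:2604.23119 — 5 statements merged into one kernel-verified Lean document; each statement's English description precedes it below -/
import Mathlib

section
/- Let n_a, n_b, n_ab be natural numbers with n_ab ≤ min(n_a, n_b), and let C_a ⊆ F_2^{n_a} and C_b ⊆ F_2^{n_b} be binary linear codes with minimum distances d_a ≥ 2 and d_b ≥ 2 respectively, such that for every coordinate i the minimum Hamming weight among codewords of C_a with x_i = 1 equals d_a, and for every coordinate j the minimum Hamming weight among codewords of C_b with x_j = 1 equals d_b (coordinates 1,…,n_ab of the two codes are shared). For ε ∈ (0,1) define the schedule-(a,b) quantities: Pa(i) = Φ_{C_a,i}(ε,…,ε); q_k = ε·Pa(k) for k ≤ n_ab and q_k = ε for k > n_ab; Pb(j) = Φ_{C_b,j}(q); and P^{ab}(ε) = Σ_{k=1}^{n_ab} ε·Pa(k)·Pb(k) + Σ_{i=n_ab+1}^{n_a} ε·Pa(i) + Σ_{j=n_ab+1}^{n_b} ε·Pb(j). Define P^{ba}(ε) symmetrically with the roles of a and b exchanged. Let g_a(i) = #{x ∈ C_a : x_i = 1, w(x) = d_a} and h_a(i) = #{x ∈ C_a : x_i = 1, w(x) = d_a, supp(x) ⊆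 {n_ab+1,…,n_a}}. If d_a < d_b and Σ_{i=n_ab+1}^{n_a} (g_a(i) − h_a(i)) > 0, then there exists ε₀ > 0 such that for all ε ∈ (0, ε₀), P^{ba}(ε) < P^{ab}(ε), i.e., updating the constraint node with larger minimum distance first yields a strictly smaller total erasure probability. -/
/-!
For small `ε` both totals are decided at order `ε ^ d_a` by the private positions `i ≥ n_ab` of
`C_a`. Updating `C_a` first, bit `i` is hidden as soon as the other `d_a - 1` positions of a
weight-`d_a` codeword through `i` are erased, so `P^{ab} ≥ Σ g_a(i) ε ^ d_a (1 - ε) ^ n_a`.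
Updating `C_b` first, the shared positions reach `C_a` erased with probability
`O(ε ^ d_b) = O(ε ^ 2)`, so an erasure pattern hiding `i` costs `O(ε ^ d_a)` unless it consists of
the other positions of a weight-`d_a` codeword avoiding the shared positions. With the terms
involving `C_b`, all `O(ε ^ d_b)`, this gives `P^{ba} ≤ Σ h_a(i) ε ^ d_a + O(ε ^ (d_a + 1))`,
and `Σ (g_a(i) - h_a(i)) ≥ 1` makes the difference positive for small `ε`.
-/

open Finset
open scoped Classical

/-- Hamming weight of a binary word. -/
def wt {n : ℕ} (x : Fin n → ZMod 2) : ℕ := (univ.filter (fun j => x j ≠ 0)).card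

/-- `phi C i q` is the probability, when the all-zero codeword is sent over a binary erasure
channel in which position `j ≠ i` is erased independently with probability `q j`, that the APP
decoder's output message to position `i` is an erasure: the sum, over erasure patterns
`E ⊆ {j | j ≠ i}` such that some codeword `x ∈ C` has `x i = 1` and support contained in
`E ∪ {i}`, of the probability of the pattern `E`. -/
noncomputable def phi {n : ℕ} (C : Submodule (ZMod 2) (Fin n → ZMod 2)) (i : Fin n)
    (q : Fin n → ℝ) : ℝ :=
  ∑ E ∈ (univ.erase i).powerset,
    if ∃ x ∈ C, x i = 1 ∧ univ.filter (fun j => x j ≠ 0) ⊆ insert i E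
    then (∏ j ∈ E, q j) * ∏ j ∈ (univ.erase i) \ E, (1 - q j)
    else 0

/-- `phi` with natural-number indexing (junk value `0` out of range). -/
noncomputable def phiNat {n : ℕ} (C : Submodule (ZMod 2) (Fin n → ZMod 2)) (k : ℕ)
    (q : ℕ → ℝ) : ℝ :=
  if h : k < n then phi C ⟨k, h⟩ (fun j => q j.1) else 0

section Code

variable {n : ℕ}

def supp (x : Fin n → ZMod 2) : Finset (Fin n) := univ.filter fun j => x j ≠ 0

@[simp]
lemma mem_supp {x : Fin n → ZMod 2} {j : Fin n} : j ∈ supp x ↔ x j ≠ 0 := by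
  simp [supp]

lemma wt_eq_card_supp (x : Fin n → ZMod 2) : wt x = #(supp x) := rfl

lemma supp_injective : Function.Injective (supp : (Fin n → ZMod 2) → Finset (Fin n)) := by
  intro x y hxy
  have binary : ∀ a b : ZMod 2, (a ≠ 0 ↔ b ≠ 0) → a = b := by decide
  funext j
  exact binary _ _ (by rw [← mem_supp, ← mem_supp, hxy])

lemma ne_zero_of_apply_eq_one {x : Fin n → ZMod 2} {i : Fin n} (hxi : x i = 1) : x ≠ 0 :=
  fun h => by simp [h] at hxi

variable (C : Submodule (ZMod 2) (Fin n → ZMod 2))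

/-- The erasure pattern `E` leaves bit `i` undetermined for the APP decoder. -/
def Conceals (i : Fin n) (E : Finset (Fin n)) : Prop :=
  ∃ x ∈ C, x i = 1 ∧ supp x ⊆ insert i E

/-- `g(i)` of the paper. -/
noncomputable def minWeightCount (d : ℕ) (i : Fin n) : ℕ :=
  {x | x ∈ C ∧ x i = 1 ∧ wt x = d}.ncard

/-- `h(i)` of the paper, with the private positions given by `p`. -/
noncomputable def supportedMinWeightCount (d : ℕ) (p : Fin n → Prop) (i : Fin n) : ℕ :=
  {x | x ∈ C ∧ x i = 1 ∧ wt x = d ∧ ∀ j, x j ≠ 0 → p j}.ncard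

variable (i : Fin n)

lemma phi_eq_sum (q : Fin n → ℝ) : phi C i q = ∑ E ∈ (univ.erase i).powerset,
    if Conceals C i E then (∏ j ∈ E, q j) * ∏ j ∈ (univ.erase i) \ E, (1 - q j) else 0 := by
  unfold phi Conceals supp
  congr! 2

lemma Conceals.le_card {d : ℕ} (hd : ∀ x ∈ C, x ≠ 0 → d ≤ wt x) {E : Finset (Fin n)}
    (hE : Conceals C i E) : d - 1 ≤ #E := by
  obtain ⟨x, hxC, hxi, hsub⟩ := hE
  have := (hd x hxC (ne_zero_of_apply_eq_one hxi)).trans (card_le_card hsub)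
  have := card_insert_le i E
  omega

lemma card_filter_powerset_erase_le (P : Finset (Fin n) → Prop) :
    #((univ.erase i).powerset.filter P) ≤ 2 ^ n :=
  calc #((univ.erase i).powerset.filter P) ≤ #(univ.erase i).powerset := card_filter_le _ _
    _ ≤ 2 ^ n := by
      rw [card_powerset, card_erase_of_mem (mem_univ i), card_univ, Fintype.card_fin]
      exact Nat.pow_le_pow_right two_pos (Nat.sub_le n 1)

section ErasureProbabilities

variable {q : Fin n → ℝ} (hq₀ : ∀ j, 0 ≤ q j) (hq₁ : ∀ j, q j ≤ 1)
include hq₀ hq₁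

lemma phi_nonneg : 0 ≤ phi C i q :=
  sum_nonneg fun E _ => by
    split_ifs
    · exact mul_nonneg (prod_nonneg fun j _ => hq₀ j) (prod_nonneg fun j _ => sub_nonneg.2 (hq₁ j))
    · exact le_rfl

lemma phi_le_one : phi C i q ≤ 1 :=
  calc phi C i q ≤ ∑ E ∈ (univ.erase i).powerset,
        (∏ j ∈ E, q j) * ∏ j ∈ (univ.erase i) \ E, (1 - q j) := by
        refine sum_le_sum fun E _ => ?_
        split_ifs
        · exact le_rfl
        · exact mul_nonneg (prod_nonneg fun j _ => hq₀ j)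
            (prod_nonneg fun j _ => sub_nonneg.2 (hq₁ j))
    _ = ∏ j ∈ univ.erase i, (q j + (1 - q j)) := (prod_add _ _ _).symm
    _ = 1 := by simp

lemma phi_le_sum_prod :
    phi C i q ≤ ∑ E ∈ (univ.erase i).powerset.filter (Conceals C i), ∏ j ∈ E, q j := by
  rw [phi_eq_sum, sum_filter]
  refine sum_le_sum fun E _ => ?_
  split_ifs
  · exact mul_le_of_le_one_right (prod_nonneg fun j _ => hq₀ j)
      (prod_le_one (fun j _ => sub_nonneg.2 (hq₁ j)) fun j _ => sub_le_self _ (hq₀ j))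
  · exact le_rfl

end ErasureProbabilities

section MinWeightPatterns

variable {i} {x : Fin n → ZMod 2}

lemma insert_erase_supp (hxi : x i = 1) : insert i ((supp x).erase i) = supp x :=
  insert_erase (by simp [hxi])

lemma card_erase_supp (hxi : x i = 1) : #((supp x).erase i) = wt x - 1 :=
  card_erase_of_mem (by simp [hxi])

lemma erase_supp_mem_powerset : (supp x).erase i ∈ (univ.erase i).powerset :=
  mem_powerset.2 (erase_subset_erase i (subset_univ _))

lemma conceals_erase_supp (hxC : x ∈ C) (hxi : x i = 1) : Conceals C i ((supp x).erase i) :=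
  ⟨x, hxC, hxi, (insert_erase_supp hxi).ge⟩

lemma injOn_erase_supp :
    Set.InjOn (fun x : Fin n → ZMod 2 => (supp x).erase i) {x | x i = 1} :=
  fun x hx y hy hxy => supp_injective <| by
    rw [← insert_erase_supp hx, ← insert_erase_supp hy]
    exact congrArg (insert i) hxy

variable (i)

lemma minWeightCount_mul_le_phi (d : ℕ) {ε : ℝ} (hε₀ : 0 ≤ ε) (hε₁ : ε ≤ 1) :
    (minWeightCount C d i : ℝ) * (ε ^ (d - 1) * (1 - ε) ^ n) ≤ phi C i (fun _ => ε) := by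
  set A := {x | x ∈ C ∧ x i = 1 ∧ wt x = d}.toFinset
  set f := fun x : Fin n → ZMod 2 => (supp x).erase i
  set term := fun E : Finset (Fin n) =>
    if Conceals C i E then ε ^ #E * (1 - ε) ^ #((univ.erase i) \ E) else 0
  have hA : ∀ x ∈ A, x ∈ C ∧ x i = 1 ∧ wt x = d := fun x hx => by simpa [A] using hx
  have hterm : ∀ x ∈ A, ε ^ (d - 1) * (1 - ε) ^ n ≤ term (f x) := fun x hx => by
    obtain ⟨hxC, hxi, hwt⟩ := hA x hx
    simp only [term, f, if_pos (conceals_erase_supp C hxC hxi), card_erase_supp hxi, hwt]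
    exact mul_le_mul_of_nonneg_left (pow_le_pow_of_le_one (by linarith) (by linarith)
      ((card_le_univ _).trans_eq (Fintype.card_fin n))) (pow_nonneg hε₀ _)
  have hterm_nonneg : ∀ E, 0 ≤ term E := fun E => by
    simp only [term]
    split_ifs
    · exact mul_nonneg (pow_nonneg hε₀ _) (pow_nonneg (by linarith) _)
    · exact le_rfl
  rw [minWeightCount, Set.ncard_eq_toFinset_card', phi_eq_sum]
  simp only [prod_const]
  calc (#A : ℝ) * (ε ^ (d - 1) * (1 - ε) ^ n) = ∑ _x ∈ A, ε ^ (d - 1) * (1 - ε) ^ n := by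
        rw [sum_const, nsmul_eq_mul]
    _ ≤ ∑ x ∈ A, term (f x) := sum_le_sum hterm
    _ = ∑ E ∈ A.image f, term E :=
        (sum_image fun x hx y hy => injOn_erase_supp (hA x hx).2.1 (hA y hy).2.1).symm
    _ ≤ ∑ E ∈ (univ.erase i).powerset, term E :=
        sum_le_sum_of_subset_of_nonneg
          (image_subset_iff.2 fun _ _ => erase_supp_mem_powerset) fun E _ _ => hterm_nonneg E

lemma card_filter_conceals_le_supportedMinWeightCount (p : Fin n → Prop) (hi : p i) {d : ℕ}
    (hd : ∀ x ∈ C, x ≠ 0 → d ≤ wt x) :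
    #(((univ.erase i).powerset.filter (Conceals C i)).filter
        fun E => #E + 1 = d ∧ ∀ k ∈ E, p k)
      ≤ supportedMinWeightCount C d p i := by
  rw [supportedMinWeightCount, Set.ncard_eq_toFinset_card']
  refine (card_le_card fun E hE => ?_).trans (card_image_le (f := fun x => (supp x).erase i))
  simp only [mem_filter, mem_powerset] at hE
  obtain ⟨⟨hEi, x, hxC, hxi, hsub⟩, hcard, hp⟩ := hE
  have hiE : i ∉ E := fun h => by simpa using hEi h
  have hsupp : supp x = insert i E := eq_of_subset_of_card_le hsub <| by
    rw [card_insert_of_notMem hiE, hcard]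
    exact hd x hxC (ne_zero_of_apply_eq_one hxi)
  refine mem_image.2 ⟨x, ?_, by rw [hsupp, erase_insert hiE]⟩
  have hx : ∀ j, x j ≠ 0 → p j := fun j hj => by
    rcases mem_insert.1 (hsupp ▸ mem_supp.2 hj) with rfl | hjE
    exacts [hi, hp j hjE]
  rw [Set.mem_toFinset]
  exact ⟨hxC, hxi, by rw [wt_eq_card_supp, hsupp, card_insert_of_notMem hiE, hcard], hx⟩

end MinWeightPatterns

section SmallErasureProbabilities

variable {q : Fin n → ℝ} {ε : ℝ} (hε₀ : 0 ≤ ε) (hε₁ : ε ≤ 1)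
  (hq₀ : ∀ j, 0 ≤ q j) (hqε : ∀ j, q j ≤ ε)
include hq₀ hqε

lemma prod_le_pow_card (E : Finset (Fin n)) : ∏ j ∈ E, q j ≤ ε ^ #E :=
  (prod_le_prod (fun j _ => hq₀ j) fun j _ => hqε j).trans_eq (prod_const ε)

include hε₀ hε₁

lemma phi_le_pow {d : ℕ} (hd : ∀ x ∈ C, x ≠ 0 → d ≤ wt x) : phi C i q ≤ 2 ^ n * ε ^ (d - 1) := by
  set P := (univ.erase i).powerset.filter (Conceals C i)
  calc phi C i q ≤ ∑ E ∈ P, ∏ j ∈ E, q j :=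
        phi_le_sum_prod C i hq₀ fun j => (hqε j).trans hε₁
    _ ≤ ∑ _E ∈ P, ε ^ (d - 1) := sum_le_sum fun E hE =>
        (prod_le_pow_card hq₀ hqε E).trans
          (pow_le_pow_of_le_one hε₀ hε₁ ((mem_filter.1 hE).2.le_card C i hd))
    _ = #P * ε ^ (d - 1) := by rw [sum_const, nsmul_eq_mul]
    _ ≤ 2 ^ n * ε ^ (d - 1) := by
        gcongr
        exact_mod_cast card_filter_powerset_erase_le i _

variable (p : Fin n → Prop) {M : ℝ} (hM : 1 ≤ M) (hqM : ∀ j, ¬ p j → q j ≤ M * ε ^ 2)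
include hM hqM

omit hε₀ hε₁ in
lemma prod_le_mul_pow_card_succ {E : Finset (Fin n)} {k : Fin n} (hk : k ∈ E) (hkp : ¬ p k) :
    ∏ j ∈ E, q j ≤ M * ε ^ (#E + 1) := by
  rw [← mul_prod_erase E q hk]
  have hE : #E + 1 = 2 + #(E.erase k) := by
    have := card_pos.2 ⟨k, hk⟩
    rw [card_erase_of_mem hk]
    omega
  calc q k * ∏ j ∈ E.erase k, q j ≤ M * ε ^ 2 * ε ^ #(E.erase k) :=
        mul_le_mul (hqM k hkp) (prod_le_pow_card hq₀ hqε _) (prod_nonneg fun j _ => hq₀ j)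
          (by positivity)
    _ = M * ε ^ (#E + 1) := by rw [hE, pow_add]; ring

lemma prod_le_ite_add {d : ℕ} {E : Finset (Fin n)} (hE : d ≤ #E + 1) :
    ∏ j ∈ E, q j ≤ (if #E + 1 = d ∧ ∀ k ∈ E, p k then ε ^ (d - 1) else 0) + M * ε ^ d := by
  have hMε : 0 ≤ M * ε ^ d := by positivity
  split_ifs with hlight
  · have := prod_le_pow_card hq₀ hqε E
    rw [show #E = d - 1 by omega] at this
    linarith
  rw [zero_add]
  by_cases hcard : #E + 1 = d
  · push Not at hlight
    obtain ⟨k, hk, hkp⟩ := hlight hcard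
    exact (prod_le_mul_pow_card_succ hq₀ hqε p hM hqM hk hkp).trans_eq (by rw [hcard])
  · calc ∏ j ∈ E, q j ≤ ε ^ #E := prod_le_pow_card hq₀ hqε E
      _ ≤ ε ^ d := pow_le_pow_of_le_one hε₀ hε₁ (by omega)
      _ ≤ M * ε ^ d := le_mul_of_one_le_left (pow_nonneg hε₀ d) hM

lemma phi_le_supportedMinWeightCount (hi : p i) {d : ℕ} (hd : ∀ x ∈ C, x ≠ 0 → d ≤ wt x) :
    phi C i q ≤ (supportedMinWeightCount C d p i : ℝ) * ε ^ (d - 1) + 2 ^ n * M * ε ^ d := by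
  set P := (univ.erase i).powerset.filter (Conceals C i)
  calc phi C i q ≤ ∑ E ∈ P, ∏ j ∈ E, q j :=
        phi_le_sum_prod C i hq₀ fun j => (hqε j).trans hε₁
    _ ≤ ∑ E ∈ P, ((if #E + 1 = d ∧ ∀ k ∈ E, p k then ε ^ (d - 1) else 0) + M * ε ^ d) :=
        sum_le_sum fun E hE => prod_le_ite_add hε₀ hε₁ hq₀ hqε p hM hqM <| by
          have := (mem_filter.1 hE).2.le_card C i hd
          omega
    _ = #(P.filter fun E => #E + 1 = d ∧ ∀ k ∈ E, p k) * ε ^ (d - 1) + #P * (M * ε ^ d) := by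
        rw [sum_add_distrib, sum_ite, sum_const_zero, add_zero, sum_const, sum_const,
          nsmul_eq_mul, nsmul_eq_mul]
    _ ≤ _ := by
        rw [mul_assoc (2 ^ n : ℝ)]
        gcongr
        · exact_mod_cast card_filter_conceals_le_supportedMinWeightCount C i p hi hd
        · exact_mod_cast card_filter_powerset_erase_le i _

end SmallErasureProbabilities

section NatIndexing

variable {q : ℕ → ℝ} (hq₀ : ∀ k, 0 ≤ q k)

lemma phiNat_val (q : ℕ → ℝ) : phiNat C i q = phi C i (fun j => q j) :=
  dif_pos i.isLt

variable (k : ℕ)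
include hq₀

lemma phiNat_nonneg (hq₁ : ∀ k, q k ≤ 1) : 0 ≤ phiNat C k q := by
  unfold phiNat
  split_ifs
  exacts [phi_nonneg C _ (fun j => hq₀ j) fun j => hq₁ j, le_rfl]

lemma phiNat_le_one (hq₁ : ∀ k, q k ≤ 1) : phiNat C k q ≤ 1 := by
  unfold phiNat
  split_ifs
  exacts [phi_le_one C _ (fun j => hq₀ j) fun j => hq₁ j, zero_le_one]

lemma phiNat_le_pow {d : ℕ} (hd : ∀ x ∈ C, x ≠ 0 → d ≤ wt x) {ε : ℝ} (hε₀ : 0 ≤ ε)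
    (hε₁ : ε ≤ 1) (hqε : ∀ k, q k ≤ ε) : phiNat C k q ≤ 2 ^ n * ε ^ (d - 1) := by
  unfold phiNat
  split_ifs
  exacts [phi_le_pow C _ hε₀ hε₁ (fun j => hq₀ j) (fun j => hqε j) hd, by positivity]

end NatIndexing

end Code

lemma sum_Ico_eq_sum_filter_fin {M : Type*} [AddCommMonoid M] (f : ℕ → M) (a n : ℕ) :
    ∑ k ∈ Ico a n, f k = ∑ i ∈ univ.filter (fun i : Fin n => a ≤ (i : ℕ)), f i := by
  rw [sum_filter, Fin.sum_univ_eq_sum_range (fun k => if a ≤ k then f k else 0), ← sum_filter]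
  congr 1
  ext k
  simp only [mem_Ico, mem_filter, mem_range]
  omega

section Schedule

variable {n₁ n₂ : ℕ} (C₁ : Submodule (ZMod 2) (Fin n₁ → ZMod 2))
  (C₂ : Submodule (ZMod 2) (Fin n₂ → ZMod 2)) (m : ℕ)

/-- The vector `q` of the paper: erasure probabilities entering `C₂` once `C₁` has been updated,
the shared positions being those `< m`. -/
noncomputable def scheduleInput (ε : ℝ) (k : ℕ) : ℝ :=
  if k < m then ε * phiNat C₁ k (fun _ => ε) else ε

/-- `P^{ab}(ε)` of the paper, for `a = C₁` and `b = C₂`. -/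
noncomputable def scheduleErasure (ε : ℝ) : ℝ :=
  (∑ k ∈ range m, ε * phiNat C₁ k (fun _ => ε) * phiNat C₂ k (scheduleInput C₁ m ε))
    + (∑ i ∈ Ico m n₁, ε * phiNat C₁ i (fun _ => ε))
    + (∑ j ∈ Ico m n₂, ε * phiNat C₂ j (scheduleInput C₁ m ε))

section FixedEpsilon

variable {ε : ℝ} (hε₀ : 0 ≤ ε) (hε₁ : ε ≤ 1)
include hε₀ hε₁

lemma scheduleInput_nonneg (k : ℕ) : 0 ≤ scheduleInput C₁ m ε k := by
  unfold scheduleInput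
  split_ifs
  exacts [mul_nonneg hε₀ (phiNat_nonneg C₁ (fun _ => hε₀) k fun _ => hε₁), hε₀]

lemma scheduleInput_le (k : ℕ) : scheduleInput C₁ m ε k ≤ ε := by
  unfold scheduleInput
  split_ifs
  exacts [mul_le_of_le_one_right hε₀ (phiNat_le_one C₁ (fun _ => hε₀) k fun _ => hε₁), le_rfl]

lemma phiNat_scheduleInput_nonneg (k : ℕ) : 0 ≤ phiNat C₂ k (scheduleInput C₁ m ε) :=
  phiNat_nonneg C₂ (scheduleInput_nonneg C₁ m hε₀ hε₁) k
    fun k => (scheduleInput_le C₁ m hε₀ hε₁ k).trans hε₁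

lemma sum_Ico_mul_phiNat_ge {d : ℕ} (hd : d ≠ 0) :
    (∑ i ∈ univ.filter (fun i : Fin n₁ => m ≤ (i : ℕ)), (minWeightCount C₁ d i : ℝ))
        * ε ^ d * (1 - ε) ^ n₁
      ≤ ∑ i ∈ Ico m n₁, ε * phiNat C₁ i (fun _ => ε) := by
  rw [sum_Ico_eq_sum_filter_fin, sum_mul, sum_mul]
  refine sum_le_sum fun i _ => ?_
  rw [phiNat_val, ← mul_pow_sub_one hd]
  calc _ = ε * ((minWeightCount C₁ d i : ℝ) * (ε ^ (d - 1) * (1 - ε) ^ n₁)) := by ring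
    _ ≤ _ := mul_le_mul_of_nonneg_left (minWeightCount_mul_le_phi C₁ i d hε₀ hε₁) hε₀

variable {C₁} {d₁ : ℕ} (hd₁ : ∀ x ∈ C₁, x ≠ 0 → d₁ ≤ wt x)
include hd₁

lemma mul_phiNat_const_le (hd₁₀ : d₁ ≠ 0) (k : ℕ) :
    ε * phiNat C₁ k (fun _ => ε) ≤ 2 ^ n₁ * ε ^ d₁ :=
  calc ε * phiNat C₁ k (fun _ => ε) ≤ ε * (2 ^ n₁ * ε ^ (d₁ - 1)) :=
        mul_le_mul_of_nonneg_left
          (phiNat_le_pow C₁ (fun _ => hε₀) k hd₁ hε₀ hε₁ fun _ => le_rfl) hε₀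
    _ = 2 ^ n₁ * ε ^ d₁ := by rw [mul_left_comm, mul_pow_sub_one hd₁₀]

lemma scheduleInput_le_sq (hd₁₂ : 2 ≤ d₁) {k : ℕ} (hk : ¬ m ≤ k) :
    scheduleInput C₁ m ε k ≤ 2 ^ n₁ * ε ^ 2 := by
  rw [scheduleInput, if_pos (not_le.1 hk)]
  exact (mul_phiNat_const_le hε₀ hε₁ hd₁ (by omega) k).trans
    (mul_le_mul_of_nonneg_left (pow_le_pow_of_le_one hε₀ hε₁ hd₁₂) (by positivity))

lemma sum_Ico_mul_phiNat_scheduleInput_le (hd₁₂ : 2 ≤ d₁) {d₂ : ℕ}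
    (hd₂ : ∀ x ∈ C₂, x ≠ 0 → d₂ ≤ wt x) (hd₂₀ : d₂ ≠ 0) :
    ∑ j ∈ Ico m n₂, ε * phiNat C₂ j (scheduleInput C₁ m ε)
      ≤ (∑ j ∈ univ.filter (fun j : Fin n₂ => m ≤ (j : ℕ)),
          (supportedMinWeightCount C₂ d₂ (fun k => m ≤ (k : ℕ)) j : ℝ)) * ε ^ d₂
        + #(univ.filter (fun j : Fin n₂ => m ≤ (j : ℕ)))
          * (2 ^ n₂ * 2 ^ n₁ * ε ^ (d₂ + 1)) := by
  rw [sum_Ico_eq_sum_filter_fin, sum_mul, ← nsmul_eq_mul, ← sum_const, ← sum_add_distrib]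
  refine sum_le_sum fun j hj => ?_
  rw [phiNat_val]
  have hphi := phi_le_supportedMinWeightCount C₂ j hε₀ hε₁
    (fun k => scheduleInput_nonneg C₁ m hε₀ hε₁ k) (fun k => scheduleInput_le C₁ m hε₀ hε₁ k)
    (fun k => m ≤ (k : ℕ)) (one_le_pow₀ one_le_two)
    (fun k hk => scheduleInput_le_sq m hε₀ hε₁ hd₁ hd₁₂ hk) (mem_filter.1 hj).2 hd₂
  calc _ ≤ ε * ((supportedMinWeightCount C₂ d₂ (fun k => m ≤ (k : ℕ)) j : ℝ) * ε ^ (d₂ - 1)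
          + 2 ^ n₂ * 2 ^ n₁ * ε ^ d₂) := mul_le_mul_of_nonneg_left hphi hε₀
    _ = _ := by
        rw [pow_succ, ← mul_pow_sub_one hd₂₀]
        ring

end FixedEpsilon

lemma exists_scheduleErasure_ge {d : ℕ} (hd : d ≠ 0) :
    ∃ K : ℝ, ∀ ε, 0 ≤ ε → ε ≤ 1 →
      (∑ i ∈ univ.filter (fun i : Fin n₁ => m ≤ (i : ℕ)), (minWeightCount C₁ d i : ℝ)) * ε ^ d
        - K * ε ^ (d + 1) ≤ scheduleErasure C₁ C₂ m ε := by
  set S := ∑ i ∈ univ.filter (fun i : Fin n₁ => m ≤ (i : ℕ)), (minWeightCount C₁ d i : ℝ)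
  refine ⟨S * n₁, fun ε hε₀ hε₁ => ?_⟩
  have hS : 0 ≤ S := sum_nonneg fun _ _ => Nat.cast_nonneg _
  have bernoulli : 1 - n₁ * ε ≤ (1 - ε) ^ n₁ := by
    simpa [sub_eq_add_neg] using one_add_mul_le_pow (by linarith : (-2 : ℝ) ≤ -ε) n₁
  have hshared : 0 ≤ ∑ k ∈ range m,
      ε * phiNat C₁ k (fun _ => ε) * phiNat C₂ k (scheduleInput C₁ m ε) :=
    sum_nonneg fun k _ => mul_nonneg
      (mul_nonneg hε₀ (phiNat_nonneg C₁ (fun _ => hε₀) k fun _ => hε₁))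
      (phiNat_scheduleInput_nonneg C₁ C₂ m hε₀ hε₁ k)
  have hsecond : 0 ≤ ∑ j ∈ Ico m n₂, ε * phiNat C₂ j (scheduleInput C₁ m ε) :=
    sum_nonneg fun j _ => mul_nonneg hε₀ (phiNat_scheduleInput_nonneg C₁ C₂ m hε₀ hε₁ j)
  calc S * ε ^ d - S * n₁ * ε ^ (d + 1) = S * ε ^ d * (1 - n₁ * ε) := by ring
    _ ≤ S * ε ^ d * (1 - ε) ^ n₁ := mul_le_mul_of_nonneg_left bernoulli (by positivity)
    _ ≤ ∑ i ∈ Ico m n₁, ε * phiNat C₁ i (fun _ => ε) := sum_Ico_mul_phiNat_ge C₁ m hε₀ hε₁ hd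
    _ ≤ scheduleErasure C₁ C₂ m ε := by unfold scheduleErasure; linarith

variable {C₁ C₂}

lemma exists_scheduleErasure_le {d₁ d₂ : ℕ} (hd₁ : ∀ x ∈ C₁, x ≠ 0 → d₁ ≤ wt x)
    (hd₂ : ∀ x ∈ C₂, x ≠ 0 → d₂ ≤ wt x) (hd : d₂ < d₁) (hd₂₀ : d₂ ≠ 0) :
    ∃ K : ℝ, ∀ ε, 0 ≤ ε → ε ≤ 1 →
      scheduleErasure C₁ C₂ m ε ≤ (∑ j ∈ univ.filter (fun j : Fin n₂ => m ≤ (j : ℕ)),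
        (supportedMinWeightCount C₂ d₂ (fun k => m ≤ (k : ℕ)) j : ℝ)) * ε ^ d₂
          + K * ε ^ (d₂ + 1) := by
  set F := univ.filter (fun j : Fin n₂ => m ≤ (j : ℕ))
  refine ⟨(m + #(Ico m n₁)) * 2 ^ n₁ + #F * (2 ^ n₂ * 2 ^ n₁), fun ε hε₀ hε₁ => ?_⟩
  have hfirst : ∀ k, ε * phiNat C₁ k (fun _ => ε) ≤ 2 ^ n₁ * ε ^ (d₂ + 1) := fun k =>
    (mul_phiNat_const_le hε₀ hε₁ hd₁ (by omega) k).trans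
      (mul_le_mul_of_nonneg_left (pow_le_pow_of_le_one hε₀ hε₁ hd) (by positivity))
  have hshared : ∑ k ∈ range m,
      ε * phiNat C₁ k (fun _ => ε) * phiNat C₂ k (scheduleInput C₁ m ε)
        ≤ m * (2 ^ n₁ * ε ^ (d₂ + 1)) := by
    refine (sum_le_card_nsmul _ _ _ fun k _ => ?_).trans_eq (by rw [card_range, nsmul_eq_mul])
    refine (mul_le_of_le_one_right ?_ ?_).trans (hfirst k)
    · exact mul_nonneg hε₀ (phiNat_nonneg C₁ (fun _ => hε₀) k fun _ => hε₁)
    · exact phiNat_le_one C₂ (scheduleInput_nonneg C₁ m hε₀ hε₁) k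
        fun k => (scheduleInput_le C₁ m hε₀ hε₁ k).trans hε₁
  have hprivate : ∑ i ∈ Ico m n₁, ε * phiNat C₁ i (fun _ => ε)
      ≤ #(Ico m n₁) * (2 ^ n₁ * ε ^ (d₂ + 1)) :=
    (sum_le_card_nsmul _ _ _ fun k _ => hfirst k).trans_eq (nsmul_eq_mul _ _)
  have hsecond := sum_Ico_mul_phiNat_scheduleInput_le C₂ m hε₀ hε₁ hd₁ (by omega) hd₂ hd₂₀
  unfold scheduleErasure
  linarith

end Schedule

lemma exists_forall_lt_of_pow_bounds {f g : ℝ → ℝ} {a b K L : ℝ} {d : ℕ} (hba : b < a)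
    (hf : ∀ ε, 0 ≤ ε → ε ≤ 1 → a * ε ^ d - K * ε ^ (d + 1) ≤ f ε)
    (hg : ∀ ε, 0 ≤ ε → ε ≤ 1 → g ε ≤ b * ε ^ d + L * ε ^ (d + 1)) :
    ∃ ε₀ > 0, ∀ ε, 0 < ε → ε < ε₀ → g ε < f ε := by
  have hc : 0 < |K + L| + 1 := by positivity
  refine ⟨min 1 ((a - b) / (|K + L| + 1)), lt_min one_pos (div_pos (sub_pos.2 hba) hc),
    fun ε hε₀ hε => ?_⟩
  have hε₁ : ε < 1 := hε.trans_le (min_le_left _ _)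
  have hsmall : (K + L) * ε < a - b := by
    have := (lt_div_iff₀ hc).1 (hε.trans_le (min_le_right _ _))
    nlinarith [le_abs_self (K + L)]
  have key : (K + L) * ε ^ (d + 1) < (a - b) * ε ^ d := by
    rw [pow_succ, mul_comm (ε ^ d), ← mul_assoc]
    exact mul_lt_mul_of_pos_right hsmall (pow_pos hε₀ d)
  linarith [hf ε hε₀.le hε₁.le, hg ε hε₀.le hε₁.le]

theorem schedule_smaller_dmin_first_general
    (na nb nab : ℕ)
    (Ca : Submodule (ZMod 2) (Fin na → ZMod 2))
    (Cb : Submodule (ZMod 2) (Fin nb → ZMod 2))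
    (da db : ℕ) (hda2 : 2 ≤ da)
    -- `C_a` has minimum distance `d_a`, and every coordinate lies on a weight-`d_a` codeword
    (hCa_dist : ∀ x ∈ Ca, x ≠ 0 → da ≤ wt x)
    -- `C_b` has minimum distance `d_b`, and every coordinate lies on a weight-`d_b` codeword
    (hCb_dist : ∀ x ∈ Cb, x ≠ 0 → db ≤ wt x)
    -- schedule (a, b): update `a` first, then `b`
    (Pa : ℝ → ℕ → ℝ) (hPa : ∀ ε k, Pa ε k = phiNat Ca k (fun _ => ε))
    (qab : ℝ → ℕ → ℝ)
    (hqab : ∀ ε k, qab ε k = if k < nab then ε * Pa ε k else ε)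
    (Pb : ℝ → ℕ → ℝ) (hPb : ∀ ε j, Pb ε j = phiNat Cb j (qab ε))
    (Pab : ℝ → ℝ)
    (hPab : ∀ ε, Pab ε = (∑ k ∈ Finset.range nab, ε * Pa ε k * Pb ε k)
      + (∑ i ∈ Finset.Ico nab na, ε * Pa ε i)
      + (∑ j ∈ Finset.Ico nab nb, ε * Pb ε j))
    -- schedule (b, a): update `b` first, then `a`
    (Pb0 : ℝ → ℕ → ℝ) (hPb0 : ∀ ε j, Pb0 ε j = phiNat Cb j (fun _ => ε))
    (qba : ℝ → ℕ → ℝ)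
    (hqba : ∀ ε k, qba ε k = if k < nab then ε * Pb0 ε k else ε)
    (Pa' : ℝ → ℕ → ℝ) (hPa' : ∀ ε i, Pa' ε i = phiNat Ca i (qba ε))
    (Pba : ℝ → ℝ)
    (hPba : ∀ ε, Pba ε = (∑ k ∈ Finset.range nab, ε * Pb0 ε k * Pa' ε k)
      + (∑ j ∈ Finset.Ico nab nb, ε * Pb0 ε j)
      + (∑ i ∈ Finset.Ico nab na, ε * Pa' ε i))
    -- the codeword counts `g_a(i)` and `h_a(i)`
    (g h : Fin na → ℕ)
    (hg : ∀ i, g i = {x : Fin na → ZMod 2 | x ∈ Ca ∧ x i = 1 ∧ wt x = da}.ncard)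
    (hh : ∀ i, h i = {x : Fin na → ZMod 2 | x ∈ Ca ∧ x i = 1 ∧ wt x = da ∧
      ∀ j : Fin na, x j ≠ 0 → nab ≤ (j : ℕ)}.ncard)
    -- Condition 1 of the theorem
    (hdadb : da < db)
    (hgh : 0 < ∑ i ∈ univ.filter (fun i : Fin na => nab ≤ (i : ℕ)), ((g i : ℤ) - (h i : ℤ))) :
    ∃ ε₀ > 0, ∀ ε : ℝ, 0 < ε → ε < ε₀ → Pba ε < Pab ε := by
  obtain rfl : Pa = fun ε k => phiNat Ca k fun _ => ε := funext₂ hPa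
  obtain rfl : Pb0 = fun ε k => phiNat Cb k fun _ => ε := funext₂ hPb0
  obtain rfl : qab = scheduleInput Ca nab := funext₂ hqab
  obtain rfl : qba = scheduleInput Cb nab := funext₂ hqba
  obtain rfl : Pb = fun ε j => phiNat Cb j (scheduleInput Ca nab ε) := funext₂ hPb
  obtain rfl : Pa' = fun ε i => phiNat Ca i (scheduleInput Cb nab ε) := funext₂ hPa'
  obtain rfl : g = minWeightCount Ca da := funext hg
  obtain rfl : h = supportedMinWeightCount Ca da (fun j => nab ≤ (j : ℕ)) := funext hh
  obtain rfl : Pab = scheduleErasure Ca Cb nab := funext hPab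
  obtain rfl : Pba = scheduleErasure Cb Ca nab := funext hPba
  have hgap : ∑ i ∈ univ.filter (fun i : Fin na => nab ≤ (i : ℕ)),
      (supportedMinWeightCount Ca da (fun j => nab ≤ (j : ℕ)) i : ℝ)
        < ∑ i ∈ univ.filter (fun i : Fin na => nab ≤ (i : ℕ)), (minWeightCount Ca da i : ℝ) := by
    rw [sum_sub_distrib, sub_pos] at hgh
    exact_mod_cast hgh
  obtain ⟨K, hK⟩ := exists_scheduleErasure_ge Ca Cb nab (d := da) (by omega)
  obtain ⟨L, hL⟩ := exists_scheduleErasure_le nab hCb_dist hCa_dist hdadb (by omega)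
  exact exists_forall_lt_of_pow_bounds hgap hK hL

/-- under the layered BEC schedule, if the subcode `C_a` has strictly smaller
minimum distance than `C_b` (both with every coordinate touching a minimum-weight codeword),
and the count condition `Σ (g_a(i) - h_a(i)) > 0` holds, then updating `b` first gives a
strictly smaller total erasure probability for all sufficiently small channel erasure
probability `ε`. -/
theorem schedule_smaller_dmin_first
    (na nb nab : ℕ) (hna : nab ≤ na) (hnb : nab ≤ nb)
    (Ca : Submodule (ZMod 2) (Fin na → ZMod 2))
    (Cb : Submodule (ZMod 2) (Fin nb → ZMod 2))
    (da db : ℕ) (hda2 : 2 ≤ da) (hdb2 : 2 ≤ db)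
    -- `C_a` has minimum distance `d_a`, and every coordinate lies on a weight-`d_a` codeword
    (hCa_dist : ∀ x ∈ Ca, x ≠ 0 → da ≤ wt x)
    (hCa_min : ∀ i : Fin na, ∃ x ∈ Ca, x i = 1 ∧ wt x = da)
    -- `C_b` has minimum distance `d_b`, and every coordinate lies on a weight-`d_b` codeword
    (hCb_dist : ∀ x ∈ Cb, x ≠ 0 → db ≤ wt x)
    (hCb_min : ∀ j : Fin nb, ∃ x ∈ Cb, x j = 1 ∧ wt x = db)
    -- schedule (a, b): update `a` first, then `b`
    (Pa : ℝ → ℕ → ℝ) (hPa : ∀ ε k, Pa ε k = phiNat Ca k (fun _ => ε))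
    (qab : ℝ → ℕ → ℝ)
    (hqab : ∀ ε k, qab ε k = if k < nab then ε * Pa ε k else ε)
    (Pb : ℝ → ℕ → ℝ) (hPb : ∀ ε j, Pb ε j = phiNat Cb j (qab ε))
    (Pab : ℝ → ℝ)
    (hPab : ∀ ε, Pab ε = (∑ k ∈ Finset.range nab, ε * Pa ε k * Pb ε k)
      + (∑ i ∈ Finset.Ico nab na, ε * Pa ε i)
      + (∑ j ∈ Finset.Ico nab nb, ε * Pb ε j))
    -- schedule (b, a): update `b` first, then `a`
    (Pb0 : ℝ → ℕ → ℝ) (hPb0 : ∀ ε j, Pb0 ε j = phiNat Cb j (fun _ => ε))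
    (qba : ℝ → ℕ → ℝ)
    (hqba : ∀ ε k, qba ε k = if k < nab then ε * Pb0 ε k else ε)
    (Pa' : ℝ → ℕ → ℝ) (hPa' : ∀ ε i, Pa' ε i = phiNat Ca i (qba ε))
    (Pba : ℝ → ℝ)
    (hPba : ∀ ε, Pba ε = (∑ k ∈ Finset.range nab, ε * Pb0 ε k * Pa' ε k)
      + (∑ j ∈ Finset.Ico nab nb, ε * Pb0 ε j)
      + (∑ i ∈ Finset.Ico nab na, ε * Pa' ε i))
    -- the codeword counts `g_a(i)` and `h_a(i)`
    (g h : Fin na → ℕ)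
    (hg : ∀ i, g i = {x : Fin na → ZMod 2 | x ∈ Ca ∧ x i = 1 ∧ wt x = da}.ncard)
    (hh : ∀ i, h i = {x : Fin na → ZMod 2 | x ∈ Ca ∧ x i = 1 ∧ wt x = da ∧
      ∀ j : Fin na, x j ≠ 0 → nab ≤ (j : ℕ)}.ncard)
    -- Condition 1 of the theorem
    (hdadb : da < db)
    (hgh : 0 < ∑ i ∈ univ.filter (fun i : Fin na => nab ≤ (i : ℕ)), ((g i : ℤ) - (h i : ℤ))) :
    ∃ ε₀ > 0, ∀ ε : ℝ, 0 < ε → ε < ε₀ → Pba ε < Pab ε :=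
  schedule_smaller_dmin_first_general na nb nab Ca Cb da db hda2 hCa_dist hCb_dist Pa hPa qab hqab
    Pb hPb Pab hPab Pb0 hPb0 qba hqba Pa' hPa' Pba hPba g h hg hh hdadb hgh
end

section
/- Let n_a, n_b, n_ab be natural numbers with n_ab ≤ min(n_a, n_b), and let C_a ⊆ F_2^{n_a} and C_b ⊆ F_2^{n_b} be binary linear codes both with minimum distance d ≥ 2, such that for every coordinate i the minimum Hamming weight among codewords of C_a with x_i = 1 equals d, and likewise for C_b (coordinates 1,…,n_ab of the two codes are shared). For ε ∈ (0,1) define the schedule-(a,b) quantities: Pa(i) = Φ_{C_a,i}(ε,…,ε); q_k = ε·Pa(k) for k ≤ n_ab and q_k = ε for k > n_ab; Pb(j) = Φ_{C_b,j}(q); and P^{ab}(ε) = Σ_{k=1}^{n_ab} ε·Pa(k)·Pb(k) + Σ_{i=n_ab+1}^{n_a} ε·Pa(i) + Σ_{j=n_ab+1}^{n_b} ε·Pb(j); define P^{ba}(ε) symmetrically with the roles of a and b exchanged. Let g_a(i) = #{x ∈ C_a : x_i = 1, w(x) = d}, h_a(i) = #{x ∈ C_a : x_i = 1, w(x) = d,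 supp(x) ⊆ {n_ab+1,…,n_a}}, and define g_b(j), h_b(j) analogously with supp(x) ⊆ {n_ab+1,…,n_b}. If Σ_{i=n_ab+1}^{n_a} (g_a(i) − h_a(i)) > Σ_{j=n_ab+1}^{n_b} (g_b(j) − h_b(j)), then there exists ε₀ > 0 such that for all ε ∈ (0, ε₀), P^{ba}(ε) < P^{ab}(ε). -/
open Finset
open scoped Classical

open Filter Topology

private lemma zmod2_em (a : ZMod 2) : a = 0 ∨ a = 1 := by revert a; decide

private lemma eq_of_filter_eq {n : ℕ} {x y : Fin n → ZMod 2}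
    (h : univ.filter (fun j => x j ≠ 0) = univ.filter (fun j => y j ≠ 0)) : x = y := by
  funext j
  have hj : (x j ≠ 0) ↔ (y j ≠ 0) := by
    have := Finset.ext_iff.mp h j
    simpa using this
  rcases zmod2_em (x j) with hx | hx <;> rcases zmod2_em (y j) with hy | hy <;>
    rw [hx, hy] <;> simp [hx, hy] at hj ⊢

private lemma count_lemma {n d : ℕ} (hd : 1 ≤ d) (C : Submodule (ZMod 2) (Fin n → ZMod 2)) (i : Fin n)
    (hdist : ∀ x ∈ C, x ≠ 0 → d ≤ wt x) (P : Fin n → Prop) (hPi : P i) :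
    (((univ.erase i).powerset).filter (fun E =>
        (∃ x ∈ C, x i = 1 ∧ univ.filter (fun j => x j ≠ 0) ⊆ insert i E)
        ∧ E.card = d - 1 ∧ ∀ j ∈ E, P j)).card
    = {x : Fin n → ZMod 2 | x ∈ C ∧ x i = 1 ∧ wt x = d ∧ ∀ j, x j ≠ 0 → P j}.ncard := by
  rw [Set.ncard_eq_toFinset_card']
  refine (Finset.card_bij (fun x _ => (univ.filter (fun j => x j ≠ 0)).erase i) ?_ ?_ ?_).symm
  · rintro x hx
    simp only [Set.mem_toFinset, Set.mem_setOf_eq] at hx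
    obtain ⟨hxC, hxi, hxw, hxP⟩ := hx
    have hisupp : i ∈ univ.filter (fun j => x j ≠ 0) := by
      simp [hxi]
    simp only [Finset.mem_filter, Finset.mem_powerset]
    refine ⟨Finset.erase_subset_erase i (Finset.subset_univ _), ⟨x, hxC, hxi, ?_⟩, ?_, ?_⟩
    · rw [Finset.insert_erase hisupp]
    · rw [Finset.card_erase_of_mem hisupp]; unfold wt at hxw; omega
    · intro j hj
      exact hxP j (Finset.mem_filter.mp (Finset.mem_of_mem_erase hj)).2
  · intro x hx y hy hxy
    simp only [Set.mem_toFinset, Set.mem_setOf_eq] at hx hy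
    have hix : i ∈ univ.filter (fun j => x j ≠ 0) := by simp [hx.2.1]
    have hiy : i ∈ univ.filter (fun j => y j ≠ 0) := by simp [hy.2.1]
    apply eq_of_filter_eq
    rw [← Finset.insert_erase hix, ← Finset.insert_erase hiy, hxy]
  · intro E hE
    simp only [Finset.mem_filter, Finset.mem_powerset] at hE
    obtain ⟨hEsub, ⟨x, hxC, hxi, hxsupp⟩, hEcard, hEP⟩ := hE
    have hiE : i ∉ E := fun h => (Finset.mem_erase.mp (hEsub h)).1 rfl
    have hx0 : x ≠ 0 := by
      intro h; rw [h] at hxi; exact one_ne_zero hxi.symm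
    have hcard : (insert i E).card = d := by
      rw [Finset.card_insert_of_notMem hiE]; omega
    have hsupp : univ.filter (fun j => x j ≠ 0) = insert i E := by
      apply Finset.eq_of_subset_of_card_le hxsupp
      rw [hcard]; exact hdist x hxC hx0
    refine ⟨x, ?_, ?_⟩
    · simp only [Set.mem_toFinset, Set.mem_setOf_eq]
      refine ⟨hxC, hxi, ?_, ?_⟩
      · unfold wt; rw [hsupp, hcard]
      · intro j hj
        have : j ∈ insert i E := by rw [← hsupp]; simp [hj]
        rcases Finset.mem_insert.mp this with h | h
        · rwa [h]
        · exact hEP j h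
    · show (univ.filter (fun j => x j ≠ 0)).erase i = E
      rw [hsupp, Finset.erase_insert hiE]

private lemma phi_limit_value {n d : ℕ} (hd : 1 ≤ d) (C : Submodule (ZMod 2) (Fin n → ZMod 2))
    (i : Fin n) (hdist : ∀ x ∈ C, x ≠ 0 → d ≤ wt x) (P : Fin n → Prop) (hPi : P i)
    (c : Fin n → ℝ) (hc : ∀ j, c j = if P j then (1:ℝ) else 0) :
    (∑ E ∈ (univ.erase i).powerset,
      if (∃ x ∈ C, x i = 1 ∧ univ.filter (fun j => x j ≠ 0) ⊆ insert i E) ∧ E.card = d - 1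
      then ∏ j ∈ E, c j else 0)
    = ({x : Fin n → ZMod 2 | x ∈ C ∧ x i = 1 ∧ wt x = d ∧ ∀ j, x j ≠ 0 → P j}.ncard : ℝ) := by
  rw [← count_lemma hd C i hdist P hPi]
  rw [← Finset.sum_boole]
  apply Finset.sum_congr rfl
  intro E _
  simp only [hc]
  rw [Finset.prod_boole]
  by_cases hA : (∃ x ∈ C, x i = 1 ∧ univ.filter (fun j => x j ≠ 0) ⊆ insert i E)
  · by_cases hB : E.card = d - 1
    · by_cases hC : ∀ j ∈ E, P j <;> simp [hA, hB, hC]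
    · simp [hB]
  · simp [hA]

private lemma phi_tendsto {n d : ℕ} (hd : 1 ≤ d) (C : Submodule (ZMod 2) (Fin n → ZMod 2)) (i : Fin n)
    (hdist : ∀ x ∈ C, x ≠ 0 → d ≤ wt x)
    (q : ℝ → Fin n → ℝ) (c : Fin n → ℝ)
    (hq : ∀ j, Tendsto (fun ε => q ε j / ε) (𝓝[>] (0:ℝ)) (𝓝 (c j))) :
    Tendsto (fun ε => phi C i (q ε) / ε ^ (d - 1)) (𝓝[>] (0:ℝ))
      (𝓝 (∑ E ∈ (univ.erase i).powerset,
        if (∃ x ∈ C, x i = 1 ∧ univ.filter (fun j => x j ≠ 0) ⊆ insert i E) ∧ E.card = d - 1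
        then ∏ j ∈ E, c j else 0)) := by
  have hq0 : ∀ j, Tendsto (fun ε => q ε j) (𝓝[>] (0:ℝ)) (𝓝 0) := by
    intro j
    have h1 : Tendsto (fun ε => q ε j / ε * ε) (𝓝[>] (0:ℝ)) (𝓝 (c j * 0)) :=
      (hq j).mul (tendsto_id.mono_left nhdsWithin_le_nhds)
    rw [mul_zero] at h1
    refine h1.congr' ?_
    filter_upwards [self_mem_nhdsWithin] with ε hε
    exact div_mul_cancel₀ _ (ne_of_gt hε)
  simp only [phi, Finset.sum_div]
  refine tendsto_finset_sum _ (fun E hE => ?_)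
  by_cases hcond : ∃ x ∈ C, x i = 1 ∧ univ.filter (fun j => x j ≠ 0) ⊆ insert i E
  · have hiE : i ∉ E := by
      intro h
      exact (Finset.mem_erase.mp (Finset.mem_powerset.mp hE h)).1 rfl
    have hEcard : d - 1 ≤ E.card := by
      obtain ⟨x, hxC, hxi, hxsupp⟩ := hcond
      have hx0 : x ≠ 0 := fun h => one_ne_zero (h ▸ hxi).symm
      have h1 : d ≤ wt x := hdist x hxC hx0
      have h2 : wt x ≤ (insert i E).card := Finset.card_le_card hxsupp
      rw [Finset.card_insert_of_notMem hiE] at h2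
      omega
    set k := E.card - (d - 1) with hk
    have hkcard : E.card = k + (d - 1) := by omega
    have hlim : Tendsto (fun ε => ε ^ k * ((∏ j ∈ E, q ε j / ε) *
        ∏ j ∈ (univ.erase i) \ E, (1 - q ε j))) (𝓝[>] (0:ℝ))
        (𝓝 ((0:ℝ) ^ k * ((∏ j ∈ E, c j) * ∏ j ∈ (univ.erase i) \ E, (1 - (0:ℝ))))) := by
      refine Tendsto.mul ?_ (Tendsto.mul ?_ ?_)
      · exact ((continuous_pow k).tendsto 0).mono_left nhdsWithin_le_nhds
      · exact tendsto_finset_prod _ (fun j _ => hq j)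
      · exact tendsto_finset_prod _ (fun j _ => tendsto_const_nhds.sub (hq0 j))
    have heq : (fun ε => (if (∃ x ∈ C, x i = 1 ∧ univ.filter (fun j => x j ≠ 0) ⊆ insert i E)
        then (∏ j ∈ E, q ε j) * ∏ j ∈ (univ.erase i) \ E, (1 - q ε j) else 0) / ε ^ (d-1))
        =ᶠ[𝓝[>] (0:ℝ)] (fun ε => ε ^ k * ((∏ j ∈ E, q ε j / ε) *
        ∏ j ∈ (univ.erase i) \ E, (1 - q ε j))) := by
      filter_upwards [self_mem_nhdsWithin] with ε hε
      have hεne : (ε:ℝ) ≠ 0 := ne_of_gt hε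
      rw [if_pos hcond, Finset.prod_div_distrib, Finset.prod_const]
      rw [hkcard, pow_add]
      field_simp
    have hval : (if (∃ x ∈ C, x i = 1 ∧ univ.filter (fun j => x j ≠ 0) ⊆ insert i E)
        ∧ E.card = d - 1 then ∏ j ∈ E, c j else 0)
        = (0:ℝ) ^ k * ((∏ j ∈ E, c j) * ∏ j ∈ (univ.erase i) \ E, (1 - (0:ℝ))) := by
      simp only [sub_zero, Finset.prod_const_one, mul_one]
      by_cases h2 : E.card = d - 1
      · have hk0 : k = 0 := by omega
        simp [hcond, h2, hk0]
      · have hk0 : k ≠ 0 := by omega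
        simp [h2, zero_pow hk0]
    rw [hval]
    exact hlim.congr' heq.symm
  · simp only [if_neg hcond, zero_div]
    have : ¬((∃ x ∈ C, x i = 1 ∧ univ.filter (fun j => x j ≠ 0) ⊆ insert i E) ∧ E.card = d - 1) :=
      fun h => hcond h.1
    rw [if_neg this]
    exact tendsto_const_nhds

private lemma sum_Ico_eq_sum_filter {n a : ℕ} (f : Fin n → ℝ) :
    ∑ i ∈ Finset.Ico a n, (if h : i < n then f ⟨i, h⟩ else 0)
    = ∑ i ∈ univ.filter (fun i : Fin n => a ≤ (i:ℕ)), f i := by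
  refine Finset.sum_bij' (fun k hk => (⟨k, (Finset.mem_Ico.mp hk).2⟩ : Fin n))
    (fun j _ => (j:ℕ)) ?_ ?_ ?_ ?_ ?_
  · intro k hk
    simp [Finset.mem_Ico.mp hk |>.1]
  · intro j hj
    simp only [Finset.mem_filter, Finset.mem_univ, true_and] at hj
    exact Finset.mem_Ico.mpr ⟨hj, j.2⟩
  · intro k hk; rfl
  · intro j hj; rfl
  · intro k hk
    rw [dif_pos (Finset.mem_Ico.mp hk).2]

private lemma ratio_self : Filter.Tendsto (fun ε : ℝ => ε / ε) (𝓝[>] (0:ℝ)) (𝓝 1) := by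
  refine tendsto_const_nhds.congr' ?_
  filter_upwards [self_mem_nhdsWithin] with ε hε
  exact (div_self (ne_of_gt hε)).symm

private lemma pow_tendsto_zero {k : ℕ} (hk : k ≠ 0) :
    Filter.Tendsto (fun ε : ℝ => ε ^ k) (𝓝[>] (0:ℝ)) (𝓝 0) := by
  have h : Filter.Tendsto (fun ε : ℝ => ε ^ k) (nhds 0) (nhds ((0:ℝ) ^ k)) :=
    (continuous_pow k).tendsto (0:ℝ)
  rw [zero_pow hk] at h
  exact h.mono_left nhdsWithin_le_nhds

/-- under the layered BEC schedule, if the subcodes `C_a` and `C_b` have the same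
minimum distance `d` (with every coordinate touching a minimum-weight codeword) and
`Σ_{i > n_ab} (g_a(i) - h_a(i)) > Σ_{j > n_ab} (g_b(j) - h_b(j))`, then updating `b` first
gives a strictly smaller total erasure probability for all sufficiently small `ε`. -/
theorem schedule_equal_dmin
    (na nb nab : ℕ) (hna : nab ≤ na) (hnb : nab ≤ nb)
    (Ca : Submodule (ZMod 2) (Fin na → ZMod 2))
    (Cb : Submodule (ZMod 2) (Fin nb → ZMod 2))
    (d : ℕ) (hd2 : 2 ≤ d)
    -- both codes have minimum distance `d`, every coordinate lies on a weight-`d` codeword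
    (hCa_dist : ∀ x ∈ Ca, x ≠ 0 → d ≤ wt x)
    (hCa_min : ∀ i : Fin na, ∃ x ∈ Ca, x i = 1 ∧ wt x = d)
    (hCb_dist : ∀ x ∈ Cb, x ≠ 0 → d ≤ wt x)
    (hCb_min : ∀ j : Fin nb, ∃ x ∈ Cb, x j = 1 ∧ wt x = d)
    -- schedule (a, b): update `a` first, then `b`
    (Pa : ℝ → ℕ → ℝ) (hPa : ∀ ε k, Pa ε k = phiNat Ca k (fun _ => ε))
    (qab : ℝ → ℕ → ℝ)
    (hqab : ∀ ε k, qab ε k = if k < nab then ε * Pa ε k else ε)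
    (Pb : ℝ → ℕ → ℝ) (hPb : ∀ ε j, Pb ε j = phiNat Cb j (qab ε))
    (Pab : ℝ → ℝ)
    (hPab : ∀ ε, Pab ε = (∑ k ∈ Finset.range nab, ε * Pa ε k * Pb ε k)
      + (∑ i ∈ Finset.Ico nab na, ε * Pa ε i)
      + (∑ j ∈ Finset.Ico nab nb, ε * Pb ε j))
    -- schedule (b, a): update `b` first, then `a`
    (Pb0 : ℝ → ℕ → ℝ) (hPb0 : ∀ ε j, Pb0 ε j = phiNat Cb j (fun _ => ε))
    (qba : ℝ → ℕ → ℝ)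
    (hqba : ∀ ε k, qba ε k = if k < nab then ε * Pb0 ε k else ε)
    (Pa' : ℝ → ℕ → ℝ) (hPa' : ∀ ε i, Pa' ε i = phiNat Ca i (qba ε))
    (Pba : ℝ → ℝ)
    (hPba : ∀ ε, Pba ε = (∑ k ∈ Finset.range nab, ε * Pb0 ε k * Pa' ε k)
      + (∑ j ∈ Finset.Ico nab nb, ε * Pb0 ε j)
      + (∑ i ∈ Finset.Ico nab na, ε * Pa' ε i))
    -- the codeword counts `g_a(i), h_a(i)` and `g_b(j), h_b(j)`
    (ga ha : Fin na → ℕ) (gb hb : Fin nb → ℕ)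
    (hga : ∀ i, ga i = {x : Fin na → ZMod 2 | x ∈ Ca ∧ x i = 1 ∧ wt x = d}.ncard)
    (hha : ∀ i, ha i = {x : Fin na → ZMod 2 | x ∈ Ca ∧ x i = 1 ∧ wt x = d ∧
      ∀ j : Fin na, x j ≠ 0 → nab ≤ (j : ℕ)}.ncard)
    (hgb : ∀ j, gb j = {x : Fin nb → ZMod 2 | x ∈ Cb ∧ x j = 1 ∧ wt x = d}.ncard)
    (hhb : ∀ j, hb j = {x : Fin nb → ZMod 2 | x ∈ Cb ∧ x j = 1 ∧ wt x = d ∧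
      ∀ k : Fin nb, x k ≠ 0 → nab ≤ (k : ℕ)}.ncard)
    -- Condition 2 of the theorem
    (hcond : (∑ j ∈ univ.filter (fun j : Fin nb => nab ≤ (j : ℕ)), ((gb j : ℤ) - (hb j : ℤ)))
      < ∑ i ∈ univ.filter (fun i : Fin na => nab ≤ (i : ℕ)), ((ga i : ℤ) - (ha i : ℤ))) :
    ∃ ε₀ > 0, ∀ ε : ℝ, 0 < ε → ε < ε₀ → Pba ε < Pab ε := by
  have hd1 : 1 ≤ d := by omega
  have hdm : d - 1 ≠ 0 := by omega
  have hdd : ∀ ε : ℝ, ε ≠ 0 → ∀ X : ℝ, ε * X / ε ^ d = X / ε ^ (d - 1) := by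
    intro ε hε X
    have h : ε ^ d = ε * ε ^ (d - 1) := by
      rw [← pow_succ']
      congr 1
      omega
    rw [h]
    rw [mul_div_mul_left _ _ hε]
  -- Pa with constant erasure probability tends to ga
  have hPaF : ∀ i : Fin na, Tendsto (fun ε : ℝ => Pa ε (i:ℕ) / ε ^ (d - 1)) (𝓝[>] (0:ℝ))
      (𝓝 ((ga i : ℝ))) := by
    intro i
    have h := phi_tendsto hd1 Ca i hCa_dist (fun ε _ => ε)
      (fun _ => (1:ℝ)) (fun j => ratio_self)
    beta_reduce at h
    rw [phi_limit_value hd1 Ca i hCa_dist (fun _ => True) trivial (fun _ => (1:ℝ))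
      (fun j => by simp)] at h
    have hset : {x : Fin na → ZMod 2 | x ∈ Ca ∧ x i = 1 ∧ wt x = d ∧ ∀ j, x j ≠ 0 → True}
        = {x : Fin na → ZMod 2 | x ∈ Ca ∧ x i = 1 ∧ wt x = d} := by
      ext x; simp
    rw [hset, ← hga i] at h
    refine h.congr (fun ε => ?_)
    simp [hPa, phiNat, i.isLt]
  have hPb0F : ∀ j : Fin nb, Tendsto (fun ε : ℝ => Pb0 ε (j:ℕ) / ε ^ (d - 1)) (𝓝[>] (0:ℝ))
      (𝓝 ((gb j : ℝ))) := by
    intro j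
    have h := phi_tendsto hd1 Cb j hCb_dist (fun ε _ => ε)
      (fun _ => (1:ℝ)) (fun t => ratio_self)
    beta_reduce at h
    rw [phi_limit_value hd1 Cb j hCb_dist (fun _ => True) trivial (fun _ => (1:ℝ))
      (fun t => by simp)] at h
    have hset : {x : Fin nb → ZMod 2 | x ∈ Cb ∧ x j = 1 ∧ wt x = d ∧ ∀ t, x t ≠ 0 → True}
        = {x : Fin nb → ZMod 2 | x ∈ Cb ∧ x j = 1 ∧ wt x = d} := by
      ext x; simp
    rw [hset, ← hgb j] at h
    refine h.congr (fun ε => ?_)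
    simp [hPb0, phiNat, j.isLt]
  -- Pa, Pb0 tend to zero
  have hPa_zero : ∀ k, k < na → Tendsto (fun ε : ℝ => Pa ε k) (𝓝[>] (0:ℝ)) (𝓝 0) := by
    intro k hk
    have h := (hPaF ⟨k, hk⟩).mul (pow_tendsto_zero hdm)
    rw [mul_zero] at h
    refine h.congr' ?_
    filter_upwards [self_mem_nhdsWithin] with ε hε
    exact div_mul_cancel₀ _ (pow_ne_zero _ (ne_of_gt hε))
  have hPb0_zero : ∀ k, k < nb → Tendsto (fun ε : ℝ => Pb0 ε k) (𝓝[>] (0:ℝ)) (𝓝 0) := by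
    intro k hk
    have h := (hPb0F ⟨k, hk⟩).mul (pow_tendsto_zero hdm)
    rw [mul_zero] at h
    refine h.congr' ?_
    filter_upwards [self_mem_nhdsWithin] with ε hε
    exact div_mul_cancel₀ _ (pow_ne_zero _ (ne_of_gt hε))
  -- the effective channel seen by Cb in schedule (a,b)
  have hqB : ∀ t : Fin nb, Tendsto (fun ε : ℝ => qab ε (t:ℕ) / ε) (𝓝[>] (0:ℝ))
      (𝓝 (if nab ≤ (t:ℕ) then (1:ℝ) else 0)) := by
    intro t
    by_cases h : (t:ℕ) < nab
    · rw [if_neg (by omega)]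
      refine (hPa_zero (t:ℕ) (lt_of_lt_of_le h hna)).congr' ?_
      filter_upwards [self_mem_nhdsWithin] with ε hε
      rw [hqab, if_pos h, mul_comm, mul_div_assoc, div_self (ne_of_gt hε), mul_one]
    · rw [if_pos (by omega)]
      refine ratio_self.congr (fun ε => ?_)
      rw [hqab, if_neg h]
  have hqA : ∀ t : Fin na, Tendsto (fun ε : ℝ => qba ε (t:ℕ) / ε) (𝓝[>] (0:ℝ))
      (𝓝 (if nab ≤ (t:ℕ) then (1:ℝ) else 0)) := by
    intro t
    by_cases h : (t:ℕ) < nab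
    · rw [if_neg (by omega)]
      refine (hPb0_zero (t:ℕ) (lt_of_lt_of_le h hnb)).congr' ?_
      filter_upwards [self_mem_nhdsWithin] with ε hε
      rw [hqba, if_pos h, mul_comm, mul_div_assoc, div_self (ne_of_gt hε), mul_one]
    · rw [if_pos (by omega)]
      refine ratio_self.congr (fun ε => ?_)
      rw [hqba, if_neg h]
  -- Pb in schedule (a,b)
  have hPbL : ∀ j : Fin nb, Tendsto (fun ε : ℝ => Pb ε (j:ℕ) / ε ^ (d - 1)) (𝓝[>] (0:ℝ))
      (𝓝 (∑ E ∈ (univ.erase j).powerset,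
        if (∃ x ∈ Cb, x j = 1 ∧ univ.filter (fun t => x t ≠ 0) ⊆ insert j E) ∧ E.card = d - 1
        then ∏ t ∈ E, (if nab ≤ (t:ℕ) then (1:ℝ) else 0) else 0)) := by
    intro j
    have h := phi_tendsto hd1 Cb j hCb_dist (fun ε t => qab ε (t:ℕ))
      (fun t => if nab ≤ (t:ℕ) then (1:ℝ) else 0) hqB
    refine h.congr (fun ε => ?_)
    simp [hPb, phiNat, j.isLt]
  have hPbF : ∀ j : Fin nb, nab ≤ (j:ℕ) → Tendsto (fun ε : ℝ => Pb ε (j:ℕ) / ε ^ (d - 1))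
      (𝓝[>] (0:ℝ)) (𝓝 ((hb j : ℝ))) := by
    intro j hj
    have h := hPbL j
    rw [phi_limit_value hd1 Cb j hCb_dist (fun t => nab ≤ (t:ℕ)) hj
      (fun t => if nab ≤ (t:ℕ) then (1:ℝ) else 0) (fun t => by by_cases h2 : nab ≤ (t:ℕ) <;> simp [h2]),
      ← hhb j] at h
    exact h
  have hPa'L : ∀ i : Fin na, Tendsto (fun ε : ℝ => Pa' ε (i:ℕ) / ε ^ (d - 1)) (𝓝[>] (0:ℝ))
      (𝓝 (∑ E ∈ (univ.erase i).powerset,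
        if (∃ x ∈ Ca, x i = 1 ∧ univ.filter (fun t => x t ≠ 0) ⊆ insert i E) ∧ E.card = d - 1
        then ∏ t ∈ E, (if nab ≤ (t:ℕ) then (1:ℝ) else 0) else 0)) := by
    intro i
    have h := phi_tendsto hd1 Ca i hCa_dist (fun ε t => qba ε (t:ℕ))
      (fun t => if nab ≤ (t:ℕ) then (1:ℝ) else 0) hqA
    refine h.congr (fun ε => ?_)
    simp [hPa', phiNat, i.isLt]
  have hPa'F : ∀ i : Fin na, nab ≤ (i:ℕ) → Tendsto (fun ε : ℝ => Pa' ε (i:ℕ) / ε ^ (d - 1))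
      (𝓝[>] (0:ℝ)) (𝓝 ((ha i : ℝ))) := by
    intro i hi
    have h := hPa'L i
    rw [phi_limit_value hd1 Ca i hCa_dist (fun t => nab ≤ (t:ℕ)) hi
      (fun t => if nab ≤ (t:ℕ) then (1:ℝ) else 0) (fun t => by by_cases h2 : nab ≤ (t:ℕ) <;> simp [h2]),
      ← hha i] at h
    exact h
  -- the six sum limits
  have T1 : Tendsto (fun ε : ℝ => (∑ k ∈ Finset.range nab, ε * Pa ε k * Pb ε k) / ε ^ d)
      (𝓝[>] (0:ℝ)) (𝓝 0) := by
    have h : Tendsto (fun ε : ℝ => ∑ k ∈ Finset.range nab, (ε * Pa ε k * Pb ε k) / ε ^ d)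
        (𝓝[>] (0:ℝ)) (𝓝 (∑ _k ∈ Finset.range nab, (0:ℝ))) := by
      refine tendsto_finset_sum _ (fun k hk => ?_)
      have hkb : k < nb := lt_of_lt_of_le (Finset.mem_range.mp hk) hnb
      have hka : k < na := lt_of_lt_of_le (Finset.mem_range.mp hk) hna
      have h2 := (hPa_zero k hka).mul (hPbL ⟨k, hkb⟩)
      rw [zero_mul] at h2
      refine h2.congr' ?_
      filter_upwards [self_mem_nhdsWithin] with ε hε
      have hεne : (ε:ℝ) ≠ 0 := ne_of_gt hε
      rw [mul_assoc, hdd ε hεne, mul_div_assoc]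
    rw [Finset.sum_const_zero] at h
    refine h.congr (fun ε => (Finset.sum_div _ _ _).symm)
  have T1' : Tendsto (fun ε : ℝ => (∑ k ∈ Finset.range nab, ε * Pb0 ε k * Pa' ε k) / ε ^ d)
      (𝓝[>] (0:ℝ)) (𝓝 0) := by
    have h : Tendsto (fun ε : ℝ => ∑ k ∈ Finset.range nab, (ε * Pb0 ε k * Pa' ε k) / ε ^ d)
        (𝓝[>] (0:ℝ)) (𝓝 (∑ _k ∈ Finset.range nab, (0:ℝ))) := by
      refine tendsto_finset_sum _ (fun k hk => ?_)
      have hkb : k < nb := lt_of_lt_of_le (Finset.mem_range.mp hk) hnb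
      have hka : k < na := lt_of_lt_of_le (Finset.mem_range.mp hk) hna
      have h2 := (hPb0_zero k hkb).mul (hPa'L ⟨k, hka⟩)
      rw [zero_mul] at h2
      refine h2.congr' ?_
      filter_upwards [self_mem_nhdsWithin] with ε hε
      have hεne : (ε:ℝ) ≠ 0 := ne_of_gt hε
      rw [mul_assoc, hdd ε hεne, mul_div_assoc]
    rw [Finset.sum_const_zero] at h
    refine h.congr (fun ε => (Finset.sum_div _ _ _).symm)
  have T2 : Tendsto (fun ε : ℝ => (∑ i ∈ Finset.Ico nab na, ε * Pa ε i) / ε ^ d)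
      (𝓝[>] (0:ℝ)) (𝓝 (∑ i ∈ univ.filter (fun i : Fin na => nab ≤ (i:ℕ)), (ga i : ℝ))) := by
    rw [← sum_Ico_eq_sum_filter (fun i : Fin na => (ga i : ℝ))]
    have h : Tendsto (fun ε : ℝ => ∑ i ∈ Finset.Ico nab na, (ε * Pa ε i) / ε ^ d)
        (𝓝[>] (0:ℝ))
        (𝓝 (∑ i ∈ Finset.Ico nab na, if h : i < na then ((ga ⟨i, h⟩ : ℕ) : ℝ) else 0)) := by
      refine tendsto_finset_sum _ (fun i hi => ?_)
      obtain ⟨hi1, hi2⟩ := Finset.mem_Ico.mp hi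
      rw [dif_pos hi2]
      refine (hPaF ⟨i, hi2⟩).congr' ?_
      filter_upwards [self_mem_nhdsWithin] with ε hε
      exact (hdd ε (ne_of_gt hε) _).symm
    exact h.congr (fun ε => (Finset.sum_div _ _ _).symm)
  have T3 : Tendsto (fun ε : ℝ => (∑ j ∈ Finset.Ico nab nb, ε * Pb ε j) / ε ^ d)
      (𝓝[>] (0:ℝ)) (𝓝 (∑ j ∈ univ.filter (fun j : Fin nb => nab ≤ (j:ℕ)), (hb j : ℝ))) := by
    rw [← sum_Ico_eq_sum_filter (fun j : Fin nb => (hb j : ℝ))]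
    have h : Tendsto (fun ε : ℝ => ∑ j ∈ Finset.Ico nab nb, (ε * Pb ε j) / ε ^ d)
        (𝓝[>] (0:ℝ))
        (𝓝 (∑ j ∈ Finset.Ico nab nb, if h : j < nb then ((hb ⟨j, h⟩ : ℕ) : ℝ) else 0)) := by
      refine tendsto_finset_sum _ (fun j hj => ?_)
      obtain ⟨hj1, hj2⟩ := Finset.mem_Ico.mp hj
      rw [dif_pos hj2]
      refine (hPbF ⟨j, hj2⟩ hj1).congr' ?_
      filter_upwards [self_mem_nhdsWithin] with ε hε
      exact (hdd ε (ne_of_gt hε) _).symm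
    exact h.congr (fun ε => (Finset.sum_div _ _ _).symm)
  have T2' : Tendsto (fun ε : ℝ => (∑ j ∈ Finset.Ico nab nb, ε * Pb0 ε j) / ε ^ d)
      (𝓝[>] (0:ℝ)) (𝓝 (∑ j ∈ univ.filter (fun j : Fin nb => nab ≤ (j:ℕ)), (gb j : ℝ))) := by
    rw [← sum_Ico_eq_sum_filter (fun j : Fin nb => (gb j : ℝ))]
    have h : Tendsto (fun ε : ℝ => ∑ j ∈ Finset.Ico nab nb, (ε * Pb0 ε j) / ε ^ d)
        (𝓝[>] (0:ℝ))
        (𝓝 (∑ j ∈ Finset.Ico nab nb, if h : j < nb then ((gb ⟨j, h⟩ : ℕ) : ℝ) else 0)) := by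
      refine tendsto_finset_sum _ (fun j hj => ?_)
      obtain ⟨hj1, hj2⟩ := Finset.mem_Ico.mp hj
      rw [dif_pos hj2]
      refine (hPb0F ⟨j, hj2⟩).congr' ?_
      filter_upwards [self_mem_nhdsWithin] with ε hε
      exact (hdd ε (ne_of_gt hε) _).symm
    exact h.congr (fun ε => (Finset.sum_div _ _ _).symm)
  have T3' : Tendsto (fun ε : ℝ => (∑ i ∈ Finset.Ico nab na, ε * Pa' ε i) / ε ^ d)
      (𝓝[>] (0:ℝ)) (𝓝 (∑ i ∈ univ.filter (fun i : Fin na => nab ≤ (i:ℕ)), (ha i : ℝ))) := by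
    rw [← sum_Ico_eq_sum_filter (fun i : Fin na => (ha i : ℝ))]
    have h : Tendsto (fun ε : ℝ => ∑ i ∈ Finset.Ico nab na, (ε * Pa' ε i) / ε ^ d)
        (𝓝[>] (0:ℝ))
        (𝓝 (∑ i ∈ Finset.Ico nab na, if h : i < na then ((ha ⟨i, h⟩ : ℕ) : ℝ) else 0)) := by
      refine tendsto_finset_sum _ (fun i hi => ?_)
      obtain ⟨hi1, hi2⟩ := Finset.mem_Ico.mp hi
      rw [dif_pos hi2]
      refine (hPa'F ⟨i, hi2⟩ hi1).congr' ?_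
      filter_upwards [self_mem_nhdsWithin] with ε hε
      exact (hdd ε (ne_of_gt hε) _).symm
    exact h.congr (fun ε => (Finset.sum_div _ _ _).symm)
  -- assemble
  have hAB : Tendsto (fun ε : ℝ => Pab ε / ε ^ d) (𝓝[>] (0:ℝ))
      (𝓝 (0 + (∑ i ∈ univ.filter (fun i : Fin na => nab ≤ (i:ℕ)), (ga i : ℝ))
        + (∑ j ∈ univ.filter (fun j : Fin nb => nab ≤ (j:ℕ)), (hb j : ℝ)))) := by
    refine ((T1.add T2).add T3).congr (fun ε => ?_)
    rw [hPab ε, add_div, add_div]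
  have hBA : Tendsto (fun ε : ℝ => Pba ε / ε ^ d) (𝓝[>] (0:ℝ))
      (𝓝 (0 + (∑ j ∈ univ.filter (fun j : Fin nb => nab ≤ (j:ℕ)), (gb j : ℝ))
        + (∑ i ∈ univ.filter (fun i : Fin na => nab ≤ (i:ℕ)), (ha i : ℝ)))) := by
    refine ((T1'.add T2').add T3').congr (fun ε => ?_)
    rw [hPba ε, add_div, add_div]
  have hT : Tendsto (fun ε : ℝ => (Pab ε - Pba ε) / ε ^ d) (𝓝[>] (0:ℝ))
      (𝓝 ((0 + (∑ i ∈ univ.filter (fun i : Fin na => nab ≤ (i:ℕ)), (ga i : ℝ))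
        + (∑ j ∈ univ.filter (fun j : Fin nb => nab ≤ (j:ℕ)), (hb j : ℝ)))
        - (0 + (∑ j ∈ univ.filter (fun j : Fin nb => nab ≤ (j:ℕ)), (gb j : ℝ))
        + (∑ i ∈ univ.filter (fun i : Fin na => nab ≤ (i:ℕ)), (ha i : ℝ))))) :=
    (hAB.sub hBA).congr (fun ε => (sub_div _ _ _).symm)
  have hD : (0:ℝ) < (0 + (∑ i ∈ univ.filter (fun i : Fin na => nab ≤ (i:ℕ)), (ga i : ℝ))
        + (∑ j ∈ univ.filter (fun j : Fin nb => nab ≤ (j:ℕ)), (hb j : ℝ)))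
        - (0 + (∑ j ∈ univ.filter (fun j : Fin nb => nab ≤ (j:ℕ)), (gb j : ℝ))
        + (∑ i ∈ univ.filter (fun i : Fin na => nab ≤ (i:ℕ)), (ha i : ℝ))) := by
    have hc1 : ((∑ j ∈ univ.filter (fun j : Fin nb => nab ≤ (j:ℕ)),
        ((gb j : ℤ) - (hb j : ℤ)) : ℤ) : ℝ)
        < ((∑ i ∈ univ.filter (fun i : Fin na => nab ≤ (i:ℕ)),
        ((ga i : ℤ) - (ha i : ℤ)) : ℤ) : ℝ) := by
      exact_mod_cast hcond
    push_cast at hc1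
    rw [Finset.sum_sub_distrib, Finset.sum_sub_distrib] at hc1
    linarith
  have hev : ∀ᶠ ε in 𝓝[>] (0:ℝ), 0 < (Pab ε - Pba ε) / ε ^ d :=
    hT.eventually (eventually_gt_nhds hD)
  obtain ⟨u, hu, hsub⟩ := mem_nhdsGT_iff_exists_Ioo_subset.mp hev
  refine ⟨u, hu, fun ε hε0 hεu => ?_⟩
  have h1 : 0 < (Pab ε - Pba ε) / ε ^ d := hsub ⟨hε0, hεu⟩
  have h2 : (0:ℝ) < ε ^ d := pow_pos hε0 d
  have h3 := mul_pos h1 h2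
  rw [div_mul_cancel₀ _ (ne_of_gt h2)] at h3
  linarith
end

section
/- Let C ⊆ F_2^n be a binary linear code, let i be a coordinate such that some codeword x ∈ C has x_i = 1, let d_i be the minimum Hamming weight among codewords of C with x_i = 1, and let A_i = #{x ∈ C : x_i = 1, w(x) = d_i}. Then the one-variable function ε ↦ Φ_{C,i}(ε,…,ε) (all erasure probabilities equal to ε) satisfies lim_{ε → 0+} Φ_{C,i}(ε,…,ε)/ε^{d_i − 1} = A_i. -/
open Finset
open scoped Classical

def Good {n : ℕ} (C : Submodule (ZMod 2) (Fin n → ZMod 2)) (i : Fin n)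
    (E : Finset (Fin n)) : Prop :=
  ∃ x ∈ C, x i = 1 ∧ univ.filter (fun j => x j ≠ 0) ⊆ insert i E

lemma phi_eq {n : ℕ} (C : Submodule (ZMod 2) (Fin n → ZMod 2)) (i : Fin n)
    (q : Fin n → ℝ) :
    phi C i q = ∑ E ∈ (univ.erase i).powerset,
      if Good C i E
      then (∏ j ∈ E, q j) * ∏ j ∈ (univ.erase i) \ E, (1 - q j)
      else 0 := by
  simp only [phi, Good]
  apply Finset.sum_congr rfl
  intro E _
  congr 1

lemma zmod2_eq_one {a : ZMod 2} (h : a ≠ 0) : a = 1 := by revert h; revert a; decide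

/-- with all erasure probabilities equal to `ε`, the APP erasure probability
`Φ_{C,i}(ε,…,ε)` is asymptotic to `A_i · ε^(d_i - 1)` as `ε → 0⁺`, where `d_i` is the minimum
Hamming weight among codewords with `x i = 1` and `A_i` is the number of such minimum-weight
codewords. -/
theorem phi_asymptotics (n : ℕ) (C : Submodule (ZMod 2) (Fin n → ZMod 2)) (i : Fin n)
    (d : ℕ)
    (hd_lb : ∀ x ∈ C, x i = 1 → d ≤ wt x)
    (hd_ex : ∃ x ∈ C, x i = 1 ∧ wt x = d)
    (A : ℕ) (hA : A = {x : Fin n → ZMod 2 | x ∈ C ∧ x i = 1 ∧ wt x = d}.ncard) :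
    Filter.Tendsto (fun ε : ℝ => phi C i (fun _ => ε) / ε ^ (d - 1))
      (nhdsWithin 0 (Set.Ioi 0)) (nhds (A : ℝ)) := by
  obtain ⟨x₀, hx₀C, hx₀i, hx₀w⟩ := hd_ex
  have hi0 : i ∈ univ.filter (fun j => x₀ j ≠ 0) := by
    simp [hx₀i]
  have hd1 : 1 ≤ d := by
    have := Finset.card_pos.mpr ⟨i, hi0⟩
    rw [← hx₀w]; exact this
  -- card lower bound for good sets
  have hcard_ge : ∀ E ∈ (univ.erase i : Finset (Fin n)).powerset, Good C i E →
      d - 1 ≤ E.card := by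
    rintro E hE ⟨x, hxC, hxi, hsupp⟩
    have hiE : i ∉ E := fun h =>
      (Finset.mem_erase.mp ((Finset.mem_powerset.mp hE) h)).1 rfl
    have h1 : d ≤ E.card + 1 := by
      calc d ≤ wt x := hd_lb x hxC hxi
        _ ≤ (insert i E).card := Finset.card_le_card hsupp
        _ = E.card + 1 := Finset.card_insert_of_notMem hiE
    clear * - h1
    omega
  set g : ℝ → ℝ := fun ε => ∑ E ∈ (univ.erase i : Finset (Fin n)).powerset,
      if Good C i E then ε ^ (E.card - (d - 1)) * (1 - ε) ^ (((univ.erase i) \ E).card)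
      else 0 with hgdef
  have hcont : Continuous g := by
    apply continuous_finset_sum
    intro E _
    by_cases h : Good C i E
    · simp only [h, if_true]
      exact (continuous_pow _).mul ((continuous_const.sub continuous_id).pow _)
    · simp only [h, if_false]
      exact continuous_const
  -- g 0 = A
  have hg0 : g 0 = (A : ℝ) := by
    have step1 : g 0 = ∑ E ∈ (univ.erase i : Finset (Fin n)).powerset,
        if Good C i E ∧ E.card = d - 1 then (1 : ℝ) else 0 := by
      rw [hgdef]
      apply Finset.sum_congr rfl
      intro E hE
      by_cases h : Good C i E
      · by_cases hc : E.card = d - 1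
        · simp [h, hc]
        · have hlt := hcard_ge E hE h
          have : E.card - (d - 1) ≠ 0 := by clear * - hlt hc; omega
          simp [h, hc, zero_pow this]
      · simp [h]
    rw [step1, Finset.sum_boole]
    norm_cast
    -- now count
    have hsetcard : A = (univ.filter
        (fun x : Fin n → ZMod 2 => x ∈ C ∧ x i = 1 ∧ wt x = d)).card := by
      rw [hA]
      have : {x : Fin n → ZMod 2 | x ∈ C ∧ x i = 1 ∧ wt x = d} =
          ↑(univ.filter (fun x : Fin n → ZMod 2 => x ∈ C ∧ x i = 1 ∧ wt x = d)) := by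
        ext x; simp
      rw [this, Set.ncard_coe_finset]
    rw [hsetcard]
    symm
    apply Finset.card_bij (fun x _ => (univ.filter (fun j => x j ≠ 0)).erase i)
    · rintro x hx
      simp only [Finset.mem_filter, Finset.mem_univ, true_and] at hx
      obtain ⟨hxC, hxi, hxw⟩ := hx
      have hi : i ∈ univ.filter (fun j => x j ≠ 0) := by simp [hxi]
      simp only [Finset.mem_filter, Finset.mem_powerset]
      refine ⟨?_, ?_, ?_⟩
      · intro j hj
        rw [Finset.mem_erase] at hj ⊢
        exact ⟨hj.1, Finset.mem_univ j⟩
      · exact ⟨x, hxC, hxi, by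
          rw [Finset.insert_erase hi]⟩
      · rw [Finset.card_erase_of_mem hi]
        rw [show (univ.filter (fun j => x j ≠ 0)).card = wt x from rfl, hxw]
    · intro x hx y hy hxy
      simp only [Finset.mem_filter, Finset.mem_univ, true_and] at hx hy
      have hix : i ∈ univ.filter (fun j => x j ≠ 0) := by simp [hx.2.1]
      have hiy : i ∈ univ.filter (fun j => y j ≠ 0) := by simp [hy.2.1]
      have hsupp : univ.filter (fun j => x j ≠ 0) = univ.filter (fun j => y j ≠ 0) := by
        rw [← Finset.insert_erase hix, ← Finset.insert_erase hiy, hxy]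
      funext j
      have hmem : x j ≠ 0 ↔ y j ≠ 0 := by
        have := Finset.ext_iff.mp hsupp j
        simpa using this
      have hmem0 : x j = 0 ↔ y j = 0 := not_iff_not.mp hmem
      by_cases hxj : x j = 0
      · rw [hxj, hmem0.mp hxj]
      · rw [zmod2_eq_one hxj, zmod2_eq_one (hmem.mp hxj)]
    · intro E hE
      simp only [Finset.mem_filter] at hE
      obtain ⟨hEp, ⟨x, hxC, hxi, hsupp⟩, hEcard⟩ := hE
      have hiE : i ∉ E := fun h =>
        (Finset.mem_erase.mp ((Finset.mem_powerset.mp hEp) h)).1 rfl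
      have hcardins : (insert i E).card = d := by
        rw [Finset.card_insert_of_notMem hiE, hEcard]; clear * - hd1; omega
      have hsupp_eq : univ.filter (fun j => x j ≠ 0) = insert i E := by
        apply Finset.eq_of_subset_of_card_le hsupp
        rw [hcardins]
        exact hd_lb x hxC hxi
      have hwx : wt x = d := by
        rw [show wt x = (univ.filter (fun j => x j ≠ 0)).card from rfl, hsupp_eq, hcardins]
      refine ⟨x, ?_, ?_⟩
      · simp [hxC, hxi, hwx]
      · rw [hsupp_eq, Finset.erase_insert hiE]
  -- tendsto
  have htendg : Filter.Tendsto g (nhdsWithin 0 (Set.Ioi 0)) (nhds (A : ℝ)) := by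
    rw [← hg0]
    exact (hcont.tendsto 0).mono_left nhdsWithin_le_nhds
  apply htendg.congr'
  filter_upwards [self_mem_nhdsWithin] with ε hε
  have hε0 : (0 : ℝ) < ε := hε
  rw [phi_eq, Finset.sum_div, hgdef]
  apply Finset.sum_congr rfl
  intro E hE
  by_cases h : Good C i E
  · simp only [h, if_true]
    have hc := hcard_ge E hE h
    rw [Finset.prod_const, Finset.prod_const]
    rw [pow_sub₀ ε hε0.ne' hc]
    ring
  · simp [h]
end

section
/- Let m ∈ ℕ and let μ be the product of m standard Gaussian measures on ℝ^m (i.e., Z_1,…,Z_m i.i.d. standard normal). Let a, b ∈ ℝ^m be unit vectors with inner product ⟨a,b⟩ < 1. Then μ{z : ⟨a,z⟩ > t and ⟨b,z⟩ > t} / μ{z : ⟨a,z⟩ > t} → 0 as t → ∞; that is, the joint tail probability of two non-identical unit-variance Gaussian linear functionals is little-o of the single tail probability. -/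
open Finset MeasureTheory ProbabilityTheory

/-- The standard Gaussian tail function `Q(t) = P(Z > t)` for `Z ~ N(0,1)`. -/
noncomputable def Qfun (t : ℝ) : ℝ := ((gaussianReal 0 1) {y | t < y}).toReal

/-! On the joint event, `⟨a + b, Z⟩ > 2t`, and `⟨a + b, Z⟩` is a centred Gaussian of variance
`2 + 2⟨a, b⟩ < 4`. The Chernoff bound with the variance proxy `3 + ⟨a, b⟩ ∈ (2 + 2⟨a, b⟩, 4)`
bounds the numerator by `exp (-κ t²)` with `κ = 2 / (3 + ⟨a, b⟩) > 1/2`, while the denominator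
is `Q(t) ≥ φ(t + 1)`, which decays only like `exp (-t²/2 + O(t))`. -/

open Real Filter Topology
open scoped NNReal

lemma map_pi_gaussianReal_sum_mul {ι : Type*} [Fintype ι] (a : ι → ℝ) :
    (Measure.pi fun _ : ι => gaussianReal 0 1).map (fun z => ∑ i, a i * z i)
      = gaussianReal 0 (∑ i, a i ^ 2).toNNReal := by
  have hinner : (fun z : ι → ℝ => ∑ i, a i * z i)
      = innerSL ℝ (WithLp.toLp 2 a : EuclideanSpace ℝ ι) ∘ WithLp.toLp 2 := by
    ext z
    simp [PiLp.inner_apply, mul_comm]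
  rw [hinner, ← Measure.map_map (by fun_prop) (by fun_prop), map_pi_eq_stdGaussian,
    IsGaussian.map_eq_gaussianReal, integral_strongDual_stdGaussian, variance_dual_stdGaussian,
    innerSL_apply_norm, EuclideanSpace.real_norm_sq_eq]

lemma pi_gaussianReal_sum_mul_gt_eq_Qfun {ι : Type*} [Fintype ι] {a : ι → ℝ}
    (ha : ∑ i, a i ^ 2 = 1) (t : ℝ) :
    (Measure.pi fun _ : ι => gaussianReal 0 1).real {z | t < ∑ i, a i * z i} = Qfun t := by
  rw [Qfun, ← measureReal_def, show {z | t < ∑ i, a i * z i}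
      = (fun z : ι → ℝ => ∑ i, a i * z i) ⁻¹' Set.Ioi t from rfl,
    ← map_measureReal_apply (by fun_prop) measurableSet_Ioi, map_pi_gaussianReal_sum_mul, ha,
    Real.toNNReal_one]
  rfl

lemma hasSubgaussianMGF_id_gaussianReal {v w : ℝ≥0} (hvw : v ≤ w) :
    HasSubgaussianMGF id w (gaussianReal 0 v) where
  integrable_exp_mul t := integrable_exp_mul_gaussianReal t
  mgf_le t := by
    simp only [mgf_id_gaussianReal, zero_mul, zero_add]
    gcongr

lemma pi_gaussianReal_sum_mul_ge_le {ι : Type*} [Fintype ι] (c : ι → ℝ) {w : ℝ≥0}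
    (hc : ∑ i, c i ^ 2 ≤ w) {ε : ℝ} (hε : 0 ≤ ε) :
    (Measure.pi fun _ : ι => gaussianReal 0 1).real {z | ε ≤ ∑ i, c i * z i}
      ≤ rexp (-ε ^ 2 / (2 * w)) := by
  have hmeas : Measurable fun z : ι → ℝ => ∑ i, c i * z i := by fun_prop
  have hlaw : HasSubgaussianMGF id w
      ((Measure.pi fun _ : ι => gaussianReal 0 1).map fun z => ∑ i, c i * z i) := by
    rw [map_pi_gaussianReal_sum_mul]
    exact hasSubgaussianMGF_id_gaussianReal (Real.toNNReal_le_iff_le_coe.mpr hc)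
  exact ((HasSubgaussianMGF.id_map_iff hmeas.aemeasurable).mp hlaw).measure_ge_le hε

lemma gaussianPDFReal_add_one_le_Qfun {t : ℝ} (ht : 0 ≤ t) :
    gaussianPDFReal 0 1 (t + 1) ≤ Qfun t := by
  have hpdf : ∀ x ∈ Set.Ioc t (t + 1), gaussianPDFReal 0 1 (t + 1) ≤ gaussianPDFReal 0 1 x := by
    rintro x ⟨htx, hxt⟩
    simp only [gaussianPDFReal, NNReal.coe_one, mul_one, sub_zero]
    gcongr
    nlinarith
  calc gaussianPDFReal 0 1 (t + 1)
      ≤ ∫ x in Set.Ioc t (t + 1), gaussianPDFReal 0 1 x := by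
        simpa [Real.volume_real_Ioc] using setIntegral_ge_of_const_le measurableSet_Ioc
          (by simp [Real.volume_Ioc]) hpdf (integrable_gaussianPDFReal 0 1).integrableOn
    _ ≤ ∫ x in Set.Ioi t, gaussianPDFReal 0 1 x :=
        setIntegral_mono_set (integrable_gaussianPDFReal 0 1).integrableOn
          (ae_of_all _ (gaussianPDFReal_nonneg 0 1)) Set.Ioc_subset_Ioi_self.eventuallyLE
    _ = Qfun t := by
        rw [Qfun, gaussianReal_apply_eq_integral 0 one_ne_zero,
          ENNReal.toReal_ofReal (integral_nonneg (gaussianPDFReal_nonneg 0 1))]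
        rfl

lemma tendsto_exp_neg_mul_sq_div_Qfun {κ : ℝ} (hκ : 1 / 2 < κ) :
    Tendsto (fun t => rexp (-κ * t ^ 2) / Qfun t) atTop (𝓝 0) := by
  have hexponent : Tendsto (fun t : ℝ => t * ((1 / 2 - κ) * t + 1) + 1 / 2) atTop atBot :=
    tendsto_atBot_add_const_right _ _ <| tendsto_id.atTop_mul_atBot₀ <|
      tendsto_atBot_add_const_right _ _ <| tendsto_id.const_mul_atTop_of_neg (by linarith)
  have hbound : Tendsto (fun t => √(2 * π) * rexp (t * ((1 / 2 - κ) * t + 1) + 1 / 2))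
      atTop (𝓝 0) := by
    simpa using (tendsto_exp_atBot.comp hexponent).const_mul (√(2 * π))
  refine squeeze_zero' (Eventually.of_forall fun t => div_nonneg (exp_pos _).le
    ENNReal.toReal_nonneg) ?_ hbound
  filter_upwards [eventually_ge_atTop 0] with t ht
  have hQ := gaussianPDFReal_add_one_le_Qfun ht
  have hpdf : gaussianPDFReal 0 1 (t + 1) = (√(2 * π))⁻¹ * rexp (-(t + 1) ^ 2 / 2) := by
    simp [gaussianPDFReal]
  have hcancel : √(2 * π) * rexp (t * ((1 / 2 - κ) * t + 1) + 1 / 2)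
      * gaussianPDFReal 0 1 (t + 1) = rexp (-κ * t ^ 2) := by
    rw [hpdf, mul_mul_mul_comm, mul_inv_cancel₀ (by positivity), one_mul, ← exp_add]
    ring_nf
  rw [div_le_iff₀ ((gaussianPDFReal_pos 0 1 _ one_ne_zero).trans_le hQ), ← hcancel]
  gcongr

lemma abs_sum_mul_le_one {ι : Type*} [Fintype ι] {a b : ι → ℝ}
    (ha : ∑ i, a i ^ 2 = 1) (hb : ∑ i, b i ^ 2 = 1) : |∑ i, a i * b i| ≤ 1 := by
  rw [← sq_le_one_iff_abs_le_one]
  simpa [ha, hb] using sum_mul_sq_le_sq_mul_sq univ a b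

lemma pi_gaussianReal_joint_tail_le {ι : Type*} [Fintype ι] {a b : ι → ℝ}
    (ha : ∑ i, a i ^ 2 = 1) (hb : ∑ i, b i ^ 2 = 1) {t : ℝ} (ht : 0 ≤ t) :
    (Measure.pi fun _ : ι => gaussianReal 0 1).real
        {z | t < ∑ i, a i * z i ∧ t < ∑ i, b i * z i}
      ≤ rexp (-(2 / (3 + ∑ i, a i * b i)) * t ^ 2) := by
  set ρ := ∑ i, a i * b i
  have hsum_sq : ∑ i, (a i + b i) ^ 2 = 2 + 2 * ρ := by
    simp only [add_sq, sum_add_distrib, ha, hb, ρ, mul_sum]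
    ring_nf
  obtain ⟨hρ_ge, hρ_le⟩ := abs_le.mp (abs_sum_mul_le_one ha hb)
  have hρ : 0 < 3 + ρ := by linarith
  calc _ ≤ (Measure.pi fun _ : ι => gaussianReal 0 1).real
        {z | 2 * t ≤ ∑ i, (a i + b i) * z i} := by
        refine measureReal_mono fun z ⟨hza, hzb⟩ => ?_
        simp only [Set.mem_ofPred_eq, add_mul, sum_add_distrib]
        linarith
    _ ≤ rexp (-(2 * t) ^ 2 / (2 * (3 + ρ).toNNReal)) :=
        pi_gaussianReal_sum_mul_ge_le _ (by rw [Real.coe_toNNReal _ hρ.le]; linarith)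
          (by linarith)
    _ = rexp (-(2 / (3 + ρ)) * t ^ 2) := by
        rw [Real.coe_toNNReal _ hρ.le]
        field_simp

/-- for i.i.d. standard Gaussians `Z_1, …, Z_m` and distinct unit vectors
`a, b` (i.e. `⟨a,b⟩ < 1`), the joint tail `P(⟨a,Z⟩ > t, ⟨b,Z⟩ > t)` is little-o of the
single tail `P(⟨a,Z⟩ > t)` as `t → ∞`. -/
theorem joint_gaussian_tail_littleO
    (m : ℕ) (μ : Measure (Fin m → ℝ))
    (hμ : μ = Measure.pi (fun _ : Fin m => gaussianReal 0 1))
    (a b : Fin m → ℝ)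
    (ha : ∑ j, a j ^ 2 = 1) (hb : ∑ j, b j ^ 2 = 1)
    (hab : ∑ j, a j * b j < 1) :
    Filter.Tendsto (fun t : ℝ =>
      (μ {z | t < ∑ j, a j * z j ∧ t < ∑ j, b j * z j}).toReal /
        (μ {z | t < ∑ j, a j * z j}).toReal)
      Filter.atTop (nhds 0) := by
  subst hμ
  have hκ : 1 / 2 < 2 / (3 + ∑ j, a j * b j) := by
    have := (abs_le.mp (abs_sum_mul_le_one ha hb)).1
    rw [lt_div_iff₀ (by linarith)]
    linarith
  refine squeeze_zero' (Eventually.of_forall fun t => by positivity) ?_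
    (tendsto_exp_neg_mul_sq_div_Qfun hκ)
  filter_upwards [eventually_ge_atTop 0] with t ht
  rw [← measureReal_def, ← measureReal_def, pi_gaussianReal_sum_mul_gt_eq_Qfun ha]
  exact div_le_div_of_nonneg_right (pi_gaussianReal_joint_tail_le ha hb ht)
    ENNReal.toReal_nonneg
end

section
/- Let n ≥ 2, let C = {c ∈ F_2^n : Σ_j c_j = 0} be the single parity-check code of length n, let i be a coordinate, and let L : Fin n → ℝ. Then log( (Σ_{c ∈ C, c_i = 0} exp(Σ_{j ≠ i} (1 − c_j)·L_j)) / (Σ_{c ∈ C, c_i = 1} exp(Σ_{j ≠ i} (1 − c_j)·L_j)) ) = 2·artanh( Π_{j ≠ i} tanh(L_j / 2) ), where c_j ∈ {0,1} is regarded as a real number. That is, the exact APP log-likelihood message of a single parity-check node coincides with the tanh-rule check-node update of belief propagation. -/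
/-!
Write `σ(x) = (-1)^x` for the sign character of `ZMod 2`. Since `(1 + σ(Σ c)) / 2` is the indicator
of `Σ c = 0`, summing a product weight `∏ g_j(c_j)` over the code splits into the two products
`∏ (g_j 0 + g_j 1)` and `∏ (g_j 0 - g_j 1)`. With `g_j(x) = exp((1 - x) L_j)` these are
`T = ∏ (e^{L_j} + 1)` and `∏ (e^{L_j} - 1) = T ∏ tanh(L_j / 2)`, and fixing `c_i = 0` or `c_i = 1`
only flips the sign of the second one. So the ratio of the two APP sums is `(1 + p) / (1 - p)` with
`p = ∏_{j ≠ i} tanh(L_j / 2)`, whose logarithm is `2 artanh p`.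
-/

open Finset

noncomputable def artanh (x : ℝ) : ℝ := Real.log ((1 + x) / (1 - x)) / 2

lemma AddChar.map_sum_eq_prod {A M ι : Type*} [AddCommMonoid A] [CommMonoid M]
    (ψ : AddChar A M) (s : Finset ι) (f : ι → A) : ψ (∑ i ∈ s, f i) = ∏ i ∈ s, ψ (f i) := by
  simpa [← ofAdd_sum] using map_prod ψ.toMonoidHom (fun i => Multiplicative.ofAdd (f i)) s

lemma sum_univ_zmod_two {M : Type*} [AddCommMonoid M] (g : ZMod 2 → M) :
    ∑ x, g x = g 0 + g 1 :=
  Fin.sum_univ_two g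

lemma zmod_two_eq_zero_or_eq_one (x : ZMod 2) : x = 0 ∨ x = 1 := by
  revert x; decide

def signChar (R : Type*) [CommRing R] : AddChar (ZMod 2) R :=
  AddChar.zmodChar 2 (neg_one_sq (R := R))

section ParityCheck

variable {ι R : Type*} [Fintype ι] [DecidableEq ι] [CommRing R]

@[simp] lemma signChar_zero : signChar R 0 = 1 := AddChar.map_zero_eq_one _

@[simp] lemma signChar_one : signChar R 1 = -1 := by
  simp [signChar, AddChar.zmodChar_apply, ZMod.val_one]

lemma one_add_signChar (x : ZMod 2) : 1 + signChar R x = if x = 0 then 2 else 0 := by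
  rcases zmod_two_eq_zero_or_eq_one x with rfl | rfl
  · norm_num
  · simp

lemma sum_signChar_sum_mul_prod (f : ι → ZMod 2 → R) :
    ∑ c : ι → ZMod 2, signChar R (∑ j, c j) * ∏ j, f j (c j) = ∏ j, (f j 0 - f j 1) := by
  have hsub (j : ι) : f j 0 - f j 1 = ∑ x : ZMod 2, signChar R x * f j x := by
    simp [sum_univ_zmod_two, sub_eq_add_neg]
  simp only [hsub, Fintype.prod_sum, AddChar.map_sum_eq_prod, ← prod_mul_distrib]

theorem two_mul_sum_sum_eq_zero_prod (f : ι → ZMod 2 → R) :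
    2 * ∑ c ∈ univ.filter (fun c : ι → ZMod 2 => ∑ j, c j = 0), ∏ j, f j (c j)
      = ∏ j, (f j 0 + f j 1) + ∏ j, (f j 0 - f j 1) := by
  have hadd : ∏ j, (f j 0 + f j 1) = ∑ c : ι → ZMod 2, ∏ j, f j (c j) := by
    simp only [← Fintype.prod_sum, sum_univ_zmod_two]
  rw [hadd, ← sum_signChar_sum_mul_prod, ← sum_add_distrib, sum_filter, mul_sum]
  refine sum_congr rfl fun c _ => ?_
  rw [← one_add_mul, one_add_signChar]
  split_ifs <;> simp

theorem two_mul_sum_sum_eq_zero_apply_eq_prod_erase (i : ι) (b : ZMod 2)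
    (g : ι → ZMod 2 → R) :
    2 * ∑ c ∈ univ.filter (fun c : ι → ZMod 2 => (∑ j, c j) = 0 ∧ c i = b),
        ∏ j ∈ univ.erase i, g j (c j)
      = ∏ j ∈ univ.erase i, (g j 0 + g j 1)
        + signChar R b * ∏ j ∈ univ.erase i, (g j 0 - g j 1) := by
  -- Coordinate `i` gets the weight `[x = b]`, which turns the constraint `c i = b` into a factor.
  set f : ι → ZMod 2 → R := fun j x => if j = i then (if x = b then 1 else 0) else g j x
  have hsplit (φ : ι → (ZMod 2 → R) → R) :
      ∏ j, φ j (f j) = φ i (f i) * ∏ j ∈ univ.erase i, φ j (g j) := by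
    rw [← mul_prod_erase _ _ (mem_univ i)]
    congr 1
    exact prod_congr rfl fun j hj => by simp [f, ne_of_mem_erase hj]
  have hf (c : ι → ZMod 2) :
      ∏ j, f j (c j) = if c i = b then ∏ j ∈ univ.erase i, g j (c j) else 0 := by
    simp [hsplit fun j u => u (c j), f]
  have hfi_add : f i 0 + f i 1 = 1 := by
    rcases zmod_two_eq_zero_or_eq_one b with rfl | rfl <;> simp [f]
  have hfi_sub : f i 0 - f i 1 = signChar R b := by
    rcases zmod_two_eq_zero_or_eq_one b with rfl | rfl <;> simp [f]
  have := two_mul_sum_sum_eq_zero_prod f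
  rw [hsplit fun j u => u 0 + u 1, hsplit fun j u => u 0 - u 1, hfi_add, hfi_sub, one_mul] at this
  rw [← this]
  simp only [hf, ← sum_filter, filter_filter]

end ParityCheck

lemma Real.exp_sub_one_eq_mul_tanh_half (x : ℝ) :
    Real.exp x - 1 = (Real.exp x + 1) * Real.tanh (x / 2) := by
  have hsq : Real.exp x = Real.exp (x / 2) ^ 2 := by rw [← Real.exp_nat_mul]; ring_nf
  have hneg : Real.exp (-(x / 2)) = (Real.exp (x / 2))⁻¹ := Real.exp_neg _
  have hpos := Real.exp_pos (x / 2)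
  rw [Real.tanh_eq, hsq, hneg]
  field_simp

lemma log_div_eq_two_mul_artanh {T p : ℝ} (hT : T ≠ 0) :
    Real.log ((T + T * p) / (T - T * p)) = 2 * artanh p := by
  rw [artanh, ← mul_one_add, ← mul_one_sub, mul_div_mul_left _ _ hT]
  ring

theorem spc_app_eq_tanh_rule_general (n : ℕ) (i : Fin n) (L : Fin n → ℝ) :
    Real.log
      ((∑ c ∈ univ.filter (fun c : Fin n → ZMod 2 => (∑ j, c j) = 0 ∧ c i = 0),
          Real.exp (∑ j ∈ univ.erase i, (1 - ((c j).val : ℝ)) * L j)) /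
        (∑ c ∈ univ.filter (fun c : Fin n → ZMod 2 => (∑ j, c j) = 0 ∧ c i = 1),
          Real.exp (∑ j ∈ univ.erase i, (1 - ((c j).val : ℝ)) * L j)))
      = 2 * artanh (∏ j ∈ univ.erase i, Real.tanh (L j / 2)) := by
  set g : Fin n → ZMod 2 → ℝ := fun j x => Real.exp ((1 - (x.val : ℝ)) * L j)
  have hg0 (j : Fin n) : g j 0 = Real.exp (L j) := by simp [g]
  have hg1 (j : Fin n) : g j 1 = 1 := by
    simp only [g, ZMod.val_one, Nat.cast_one, sub_self, zero_mul, Real.exp_zero]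
  set T := ∏ j ∈ univ.erase i, (Real.exp (L j) + 1)
  have hT : T ≠ 0 := (prod_pos fun j _ => by positivity).ne'
  have happ (b : ZMod 2) :
      2 * ∑ c ∈ univ.filter (fun c : Fin n → ZMod 2 => (∑ j, c j) = 0 ∧ c i = b),
          Real.exp (∑ j ∈ univ.erase i, (1 - ((c j).val : ℝ)) * L j)
        = T + signChar ℝ b * (T * ∏ j ∈ univ.erase i, Real.tanh (L j / 2)) := by
    have := two_mul_sum_sum_eq_zero_apply_eq_prod_erase i b g
    simp only [hg0, hg1] at this
    simp only [g, ← Real.exp_sum] at this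
    rw [this]
    simp only [T, ← prod_mul_distrib, ← Real.exp_sub_one_eq_mul_tanh_half]
  rw [← mul_div_mul_left _ _ two_ne_zero, happ, happ, signChar_zero, signChar_one, one_mul,
    neg_one_mul, ← sub_eq_add_neg, log_div_eq_two_mul_artanh hT]

/-- for the single parity-check code of length `n ≥ 2`, the exact APP
log-likelihood message to coordinate `i` equals the belief-propagation tanh-rule check-node
update `2·artanh(Π_{j≠i} tanh(L_j/2))`. -/
theorem spc_app_eq_tanh_rule (n : ℕ) (hn : 2 ≤ n) (i : Fin n) (L : Fin n → ℝ) :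
    Real.log
      ((∑ c ∈ univ.filter (fun c : Fin n → ZMod 2 => (∑ j, c j) = 0 ∧ c i = 0),
          Real.exp (∑ j ∈ univ.erase i, (1 - ((c j).val : ℝ)) * L j)) /
        (∑ c ∈ univ.filter (fun c : Fin n → ZMod 2 => (∑ j, c j) = 0 ∧ c i = 1),
          Real.exp (∑ j ∈ univ.erase i, (1 - ((c j).val : ℝ)) * L j)))
      = 2 * artanh (∏ j ∈ univ.erase i, Real.tanh (L j / 2)) :=
  spc_app_eq_tanh_rule_general n i L
end
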